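/- arXiv:1808.02301 — 4 statements merged into one kernel-verified Lean document; each statement's English description precedes it below -/
import Mathlib

section
/- If T is a tilting module over a finite-dimensional algebra A (i.e., T has projective dimension at most 1, Ext^1_A(T,T) = 0, and there is a short exact sequence 0 → A → T' → T'' → 0 with T', T'' in add T), and B = End_A(T)^op, then the functor Hom_A(T,−) restricts to an equivalence between the full subcategory T of A-modules generated by T and the full subcategory Y of B-modules M with Tor_1^B(T, M) = 0 (equivalently, cogenerated by D(T)). -/
open LinearMap Function

section Framework
variable (A : Type) [Ring A]
variable (T : Type) [AddCommGroup T] [Module A T]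

/-- `M` is generated by `T`: epimorphic image of a finite direct sum of copies of `T`. -/
def IsGenBy (M : Type) [AddCommGroup M] [Module A M] : Prop :=
  ∃ (n : ℕ) (f : (Fin n → T) →ₗ[A] M), Function.Surjective f

/-- `M` is cogenerated by `T`. -/
def IsCogenBy (M : Type) [AddCommGroup M] [Module A M] : Prop :=
  ∃ (n : ℕ) (f : M →ₗ[A] (Fin n → T)), Function.Injective f

/-- `M` belongs to `add T`: direct summand of a finite direct sum of copies of `T`. -/
def InAddOf (M : Type) [AddCommGroup M] [Module A M] : Prop :=
  ∃ (n : ℕ) (f : M →ₗ[A] (Fin n → T)) (g : (Fin n → T) →ₗ[A] M), g ∘ₗ f = LinearMap.id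

/-- `Ext^1_A(X, Y) = 0`: every short exact sequence `0 → Y → E → X → 0` splits. -/
def Ext1Vanishes (X Y : Type) [AddCommGroup X] [Module A X]
    [AddCommGroup Y] [Module A Y] : Prop :=
  ∀ (E : Type) [AddCommGroup E] [Module A E], ∀ (i : Y →ₗ[A] E) (p : E →ₗ[A] X),
    Function.Injective i → Function.Surjective p → LinearMap.range i = LinearMap.ker p →
    ∃ s : X →ₗ[A] E, p ∘ₗ s = LinearMap.id

/-- `T` has projective dimension at most 1. -/
def HasPdLeOne : Prop :=
  ∃ (n : ℕ) (g : (Fin n → A) →ₗ[A] T),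
    Function.Surjective g ∧ Module.Projective A (LinearMap.ker g)

/-- `T` is a tilting module: `pd T ≤ 1`, `Ext^1(T,T) = 0`, and there is an exact
sequence `0 → A → T' → T'' → 0` with `T', T'' ∈ add T`. -/
def IsTiltingModule : Prop :=
  HasPdLeOne A T ∧ Ext1Vanishes A T T ∧
  ∃ (T' T'' : ModuleCat.{0} A), InAddOf A T T' ∧ InAddOf A T T'' ∧
    ∃ (i : A →ₗ[A] T') (p : (T' : Type) →ₗ[A] T''),
      Function.Injective i ∧ Function.Surjective p ∧ LinearMap.range i = LinearMap.ker p

variable {A T} in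
/-- `Hom_A(T, M)` is a left module over `B = End_A(T)^op`, via `b • f = f ∘ b`. -/
instance homEndOpModule (M : Type) [AddCommGroup M] [Module A M] :
    Module (Module.End A T)ᵐᵒᵖ (T →ₗ[A] M) where
  smul b f := f ∘ₗ b.unop
  one_smul f := LinearMap.comp_id f
  mul_smul b c f := by
    show f ∘ₗ ((b * c).unop : T →ₗ[A] T) = (f ∘ₗ c.unop) ∘ₗ b.unop
    rfl
  smul_zero b := LinearMap.zero_comp _
  smul_add b f g := LinearMap.add_comp _ _ _
  add_smul b c f := by
    show f ∘ₗ ((b + c).unop : T →ₗ[A] T) = f ∘ₗ b.unop + f ∘ₗ c.unop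
    ext x; simp
  zero_smul f := LinearMap.comp_zero f

variable {A T} in
lemma homEndOp_smul_def {M : Type} [AddCommGroup M] [Module A M]
    (b : (Module.End A T)ᵐᵒᵖ) (f : T →ₗ[A] M) :
    b • f = f ∘ₗ b.unop := rfl

end Framework

section Dual
variable (A : Type) [Ring A]
variable (T : Type) [AddCommGroup T] [Module A T]
variable (k : Type) [Field k] [Algebra k A] [Module k T] [IsScalarTower k A T]

/-- The `k`-dual `D(T) = Hom_k(T, k)` as a left module over `B = End_A(T)^op`,
via `(b • φ) t = φ (b t)`. -/
instance dualEndOpModule : Module (Module.End A T)ᵐᵒᵖ (T →ₗ[k] k) where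
  smul b φ := φ ∘ₗ ((b.unop : T →ₗ[A] T).restrictScalars k)
  one_smul φ := by ext x; rfl
  mul_smul b c φ := by ext x; rfl
  smul_zero b := LinearMap.zero_comp _
  smul_add b φ ψ := LinearMap.add_comp _ _ _
  add_smul b c φ := by ext x; exact φ.map_add _ _
  zero_smul φ := by ext x; exact φ.map_zero

end Dual

section HomFunctor
variable {A : Type} [Ring A]
variable {T : Type} [AddCommGroup T] [Module A T]
variable {M M' : Type} [AddCommGroup M] [Module A M] [AddCommGroup M'] [Module A M']

/-- The `B = End_A(T)ᵒᵖ`-linear map `Hom_A(T,M) → Hom_A(T,M')` induced by an `A`-linear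
map `M → M'`: the action of the functor `Hom_A(T,−)` on morphisms. -/
noncomputable def homMapB (g : M →ₗ[A] M') :
    (T →ₗ[A] M) →ₗ[(Module.End A T)ᵐᵒᵖ] (T →ₗ[A] M') where
  toFun f := g ∘ₗ f
  map_add' f f' := by ext x; simp
  map_smul' b f := rfl

end HomFunctor

section Generic
variable {A : Type} [Ring A]

/-- A splitting of a short exact sequence yields a retraction. -/
lemma retraction_of_splitting {Y E X : Type} [AddCommGroup Y] [Module A Y]
    [AddCommGroup E] [Module A E] [AddCommGroup X] [Module A X]
    (i : Y →ₗ[A] E) (p : E →ₗ[A] X) (hi : Function.Injective i)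
    (hrk : range i = ker p) (s : X →ₗ[A] E) (hs : p ∘ₗ s = LinearMap.id) :
    ∃ r : E →ₗ[A] Y, ∀ e : E, i (r e) = e - s (p e) := by
  have hq : ∀ e : E, e - s (p e) ∈ range i := by
    intro e
    rw [hrk, mem_ker]
    have h1 := congrArg (fun f : X →ₗ[A] X => f (p e)) hs
    simp only [LinearMap.comp_apply, id_apply] at h1
    rw [map_sub, h1, sub_self]
  let q : E →ₗ[A] ↥(range i) :=
    codRestrict (range i) (LinearMap.id - s ∘ₗ p) (fun e => by
      simpa using hq e)
  let eqv := LinearEquiv.ofInjective i hi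
  refine ⟨eqv.symm.toLinearMap ∘ₗ q, fun e => ?_⟩
  have h2 : i (eqv.symm (q e)) = (q e : E) := by
    have h3 := eqv.apply_symm_apply (q e)
    have h4 : ((eqv (eqv.symm (q e))) : E) = ((q e) : E) := by rw [h3]
    simpa [eqv, LinearEquiv.ofInjective_apply] using h4
  simpa [q] using h2

/-- Pushout: extend a map along an injection whose cokernel has vanishing Ext. -/
lemma pushout_extend {Z Y C X : Type} [AddCommGroup Z] [Module A Z]
    [AddCommGroup Y] [Module A Y] [AddCommGroup C] [Module A C]
    [AddCommGroup X] [Module A X]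
    (i : Z →ₗ[A] Y) (p : Y →ₗ[A] C) (hi : Function.Injective i)
    (hp : Function.Surjective p) (hrk : range i = ker p)
    (hX : Ext1Vanishes A C X) (f : Z →ₗ[A] X) :
    ∃ fbar : Y →ₗ[A] X, fbar ∘ₗ i = f := by
  classical
  set w : Z →ₗ[A] X × Y := f.prod (-i) with hw
  set W : Submodule A (X × Y) := range w with hW
  set jX : X →ₗ[A] (X × Y) ⧸ W := W.mkQ ∘ₗ inl A X Y with hjX
  have hWker : W ≤ ker (p ∘ₗ (snd A X Y)) := by
    rintro ⟨x, y⟩ ⟨z, hz⟩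
    simp only [hw, LinearMap.prod_apply, Function.prod, Prod.mk.injEq, LinearMap.neg_apply] at hz
    obtain ⟨h1, h2⟩ := hz
    have hzz : i z ∈ ker p := hrk ▸ mem_range_self i z
    rw [mem_ker] at hzz
    simp only [mem_ker, LinearMap.comp_apply, snd_apply, ← h2, map_neg, hzz, neg_zero]
  set pG : ((X × Y) ⧸ W) →ₗ[A] C := W.liftQ (p ∘ₗ snd A X Y) hWker with hpG
  -- key simp facts
  have hjXapp : ∀ x : X, jX x = Submodule.Quotient.mk (x, (0 : Y)) := fun x => rfl
  have hpGapp : ∀ xy : X × Y, pG (Submodule.Quotient.mk xy) = p xy.2 := fun xy => rfl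
  have hinj : Function.Injective jX := by
    intro a b hab
    have h0 : jX (a - b) = 0 := by rw [map_sub, hab, sub_self]
    have hmem : ((a - b : X), (0 : Y)) ∈ W := by
      rw [hjXapp, Submodule.Quotient.mk_eq_zero W] at h0
      exact h0
    obtain ⟨z, hz⟩ := hmem
    simp only [hw, LinearMap.prod_apply, Function.prod, LinearMap.neg_apply, Prod.mk.injEq] at hz
    have hz0 : z = 0 := hi (by simpa [eq_comm, neg_eq_zero] using hz.2)
    have := hz.1
    rw [hz0, map_zero] at this
    exact sub_eq_zero.mp this.symm
  have hsurj : Function.Surjective pG := by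
    intro c
    obtain ⟨y, hy⟩ := hp c
    exact ⟨Submodule.Quotient.mk ((0 : X), y), by rw [hpGapp]; exact hy⟩
  have hrg : range jX = ker pG := by
    apply le_antisymm
    · rintro _ ⟨x, rfl⟩
      rw [mem_ker, hjXapp, hpGapp, map_zero]
    · intro g hg
      obtain ⟨⟨x, y⟩, rfl⟩ := Submodule.Quotient.mk_surjective W g
      rw [mem_ker, hpGapp] at hg
      have hy : y ∈ range i := hrk ▸ hg
      obtain ⟨z, hz⟩ := hy
      refine ⟨x + f z, ?_⟩
      rw [hjXapp]
      rw [Submodule.Quotient.eq]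
      exact ⟨z, by simp [hw, hz]⟩
  obtain ⟨s, hs⟩ := hX ((X × Y) ⧸ W) jX pG hinj hsurj hrg
  obtain ⟨r, hr⟩ := retraction_of_splitting jX pG hinj hrg s hs
  refine ⟨r ∘ₗ W.mkQ ∘ₗ inr A X Y, ?_⟩
  ext z
  simp only [LinearMap.comp_apply, inr_apply, Submodule.mkQ_apply]
  have hmk : (Submodule.Quotient.mk ((0 : X), i z) : (X × Y) ⧸ W)
      = jX (f z) := by
    rw [hjXapp, Submodule.Quotient.eq]
    exact ⟨-z, by simp [hw]⟩
  rw [hmk]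
  have hji : jX (r (jX (f z))) = jX (f z) := by
    rw [hr (jX (f z))]
    have hz0 : pG (jX (f z)) = 0 := by rw [hjXapp, hpGapp]; exact map_zero p
    rw [hz0, map_zero, sub_zero]
  exact hinj hji
end Generic

section Generic2
variable {A : Type} [Ring A]

/-- Descend a map along a surjection whose kernel it kills. -/
lemma descend_of_le_ker {P M Y : Type} [AddCommGroup P] [Module A P]
    [AddCommGroup M] [Module A M] [AddCommGroup Y] [Module A Y]
    (p : P →ₗ[A] M) (hp : Function.Surjective p) (σ : P →ₗ[A] Y)
    (hle : ker p ≤ ker σ) : ∃ w : M →ₗ[A] Y, w ∘ₗ p = σ := by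
  let e := LinearMap.quotKerEquivOfSurjective p hp
  refine ⟨(ker p).liftQ σ hle ∘ₗ e.symm.toLinearMap, ?_⟩
  ext v
  simp only [LinearMap.comp_apply, LinearEquiv.coe_coe]
  have hmk : e.symm (p v) = Submodule.Quotient.mk v := by
    apply e.injective
    rw [LinearEquiv.apply_symm_apply]
    rfl
  rw [hmk]
  rfl

/-- Pullback: lift a map along a surjection whose kernel has vanishing Ext. -/
lemma lift_of_ext {E M S : Type} [AddCommGroup E] [Module A E]
    [AddCommGroup M] [Module A M] [AddCommGroup S] [Module A S]
    (e : E →ₗ[A] M) (he : Function.Surjective e)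
    (hK : Ext1Vanishes A S ↥(ker e)) (f : S →ₗ[A] M) :
    ∃ h : S →ₗ[A] E, e ∘ₗ h = f := by
  classical
  set F : Submodule A (E × S) := ker ((e ∘ₗ fst A E S) - (f ∘ₗ snd A E S)) with hF
  have hmemF : ∀ x : E × S, x ∈ F ↔ e x.1 = f x.2 := by
    intro x
    rw [hF, mem_ker, LinearMap.sub_apply, LinearMap.comp_apply, LinearMap.comp_apply,
      fst_apply, snd_apply, sub_eq_zero]
  set i : ↥(ker e) →ₗ[A] ↥F := codRestrict F ((inl A E S) ∘ₗ (ker e).subtype)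
    (fun x => by rw [hmemF]; simp [mem_ker.mp x.2]) with hi
  set pq : ↥F →ₗ[A] S := (snd A E S) ∘ₗ F.subtype with hpq
  have hiinj : Function.Injective i := by
    intro a b hab
    apply Subtype.ext
    have := congrArg (fun z : ↥F => (z : E × S).1) hab
    simpa [hi] using this
  have hpsurj : Function.Surjective pq := by
    intro sVal
    obtain ⟨x, hx⟩ := he (f sVal)
    exact ⟨⟨(x, sVal), (hmemF _).mpr hx⟩, rfl⟩
  have hrk : range i = ker pq := by
    apply le_antisymm
    · rintro _ ⟨x, rfl⟩
      rw [mem_ker]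
      rfl
    · rintro ⟨⟨x, sVal⟩, hmem⟩ hk
      rw [mem_ker] at hk
      have hs0 : sVal = 0 := hk
      have hx : x ∈ ker e := by
        rw [mem_ker]
        have := (hmemF _).mp hmem
        rw [hs0, map_zero] at this
        exact this
      exact ⟨⟨x, hx⟩, by apply Subtype.ext; simp [hi, hs0]⟩
  obtain ⟨s0, hs0⟩ := hK ↥F i pq hiinj hpsurj hrk
  refine ⟨(fst A E S) ∘ₗ F.subtype ∘ₗ s0, ?_⟩
  ext t
  have hmem := (hmemF ((s0 t) : E × S)).mp (s0 t).2
  have hpt : ((s0 t : E × S)).2 = t := by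
    have := congrArg (fun g : S →ₗ[A] S => g t) hs0
    simpa [hpq] using this
  simp only [LinearMap.comp_apply, fst_apply, Submodule.coe_subtype]
  rw [hmem, hpt]

/-- Transport Ext vanishing along an isomorphism in the second variable. -/
lemma ext_congr {C X Y : Type} [AddCommGroup C] [Module A C]
    [AddCommGroup X] [Module A X] [AddCommGroup Y] [Module A Y]
    (hX : Ext1Vanishes A C X) (eXY : X ≃ₗ[A] Y) : Ext1Vanishes A C Y := by
  intro E _ _ i p hiinj hpsurj hrk
  have hrk' : range (i ∘ₗ eXY.toLinearMap) = ker p := by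
    rw [LinearMap.range_comp, LinearEquiv.range, Submodule.map_top, hrk]
  exact hX E (i ∘ₗ eXY.toLinearMap) p (hiinj.comp eXY.injective) hpsurj hrk'

end Generic2

section Generic3
variable {A : Type} [Ring A]
variable {T : Type} [AddCommGroup T] [Module A T]

lemma ext_ker_of_ext {E C X S : Type} [AddCommGroup E] [Module A E]
    [AddCommGroup C] [Module A C] [AddCommGroup X] [Module A X]
    [AddCommGroup S] [Module A S]
    (i : X →ₗ[A] E) (p : E →ₗ[A] C) (hi : Function.Injective i)
    (hrk : range i = ker p) (hX : Ext1Vanishes A S X) :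
    Ext1Vanishes A S ↥(ker p) :=
  ext_congr hX ((LinearEquiv.ofInjective i hi).trans (LinearEquiv.ofEq _ _ hrk))

/-- Ext vanishing passes from `T` to finite powers of `T` (in the first variable). -/
lemma ext_pi_vanishes {X : Type} [AddCommGroup X] [Module A X] {n : ℕ}
    (hX : Ext1Vanishes A T X) : Ext1Vanishes A (Fin n → T) X := by
  classical
  intro E _ _ i p hiinj hpsurj hrk
  have hK : Ext1Vanishes A T ↥(ker p) := ext_ker_of_ext i p hiinj hrk hX
  have hlift : ∀ i0 : Fin n, ∃ u : T →ₗ[A] E,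
      p ∘ₗ u = LinearMap.single A (fun _ : Fin n => T) i0 :=
    fun i0 => lift_of_ext p hpsurj hK (LinearMap.single A (fun _ : Fin n => T) i0)
  choose u hu using hlift
  refine ⟨∑ i0 : Fin n, (u i0) ∘ₗ (proj i0 : (Fin n → T) →ₗ[A] T), ?_⟩
  refine LinearMap.ext fun x => ?_
  simp only [LinearMap.comp_apply, id_apply, LinearMap.sum_apply, map_sum]
  have : ∀ i0 : Fin n, p (u i0 (x i0)) = Pi.single i0 (x i0) := by
    intro i0
    have := congrArg (fun g : T →ₗ[A] (Fin n → T) => g (x i0)) (hu i0)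
    simpa using this
  simp only [proj_apply, this]
  exact Finset.univ_sum_single x

/-- Ext vanishing passes to direct summands of finite powers of `T`. -/
lemma ext_summand {X T'' : Type} [AddCommGroup X] [Module A X]
    [AddCommGroup T''] [Module A T''] {m : ℕ}
    (hX : Ext1Vanishes A T X)
    (sm : T'' →ₗ[A] (Fin m → T)) (rm : (Fin m → T) →ₗ[A] T'')
    (hm : rm ∘ₗ sm = LinearMap.id) : Ext1Vanishes A T'' X := by
  intro E _ _ i p hiinj hpsurj hrk
  have hK : Ext1Vanishes A (Fin m → T) ↥(ker p) :=
    ext_ker_of_ext i p hiinj hrk (ext_pi_vanishes hX)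
  obtain ⟨uu, huu⟩ := lift_of_ext p hpsurj hK rm
  refine ⟨uu ∘ₗ sm, ?_⟩
  rw [← LinearMap.comp_assoc, huu, hm]

end Generic3

section Present
variable {A : Type} [Ring A]
variable {T : Type} [AddCommGroup T] [Module A T]

/-- Every map from the syzygy `ker π` into `Y` extends to the projective cover. -/
def ExtendsFromKer {nP : ℕ} (π : (Fin nP → A) →ₗ[A] T) (Y : Type)
    [AddCommGroup Y] [Module A Y] : Prop :=
  ∀ ν : ↥(ker π) →ₗ[A] Y, ∃ ν' : (Fin nP → A) →ₗ[A] Y,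
    ν' ∘ₗ (ker π).subtype = ν

variable {nP : ℕ} {π : (Fin nP → A) →ₗ[A] T}

lemma extendsFromKer_of_ext {Y : Type} [AddCommGroup Y] [Module A Y]
    (hπ : Function.Surjective π) (hE : Ext1Vanishes A T Y) :
    ExtendsFromKer π Y := fun ν =>
  pushout_extend (ker π).subtype π (Submodule.injective_subtype _) hπ
    (ker π).range_subtype hE ν

lemma extendsFromKer_surj {Y X : Type} [AddCommGroup Y] [Module A Y]
    [AddCommGroup X] [Module A X]
    (hproj : Module.Projective A ↥(ker π))
    (h : ExtendsFromKer π Y) (e : Y →ₗ[A] X) (he : Function.Surjective e) :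
    ExtendsFromKer π X := by
  intro ν
  obtain ⟨ν1, hν1⟩ := Module.projective_lifting_property e ν he
  obtain ⟨ν2, hν2⟩ := h ν1
  exact ⟨e ∘ₗ ν2, by rw [LinearMap.comp_assoc, hν2, hν1]⟩

lemma extendsFromKer_pi {Y : Type} [AddCommGroup Y] [Module A Y] {n : ℕ}
    (h : ExtendsFromKer π Y) : ExtendsFromKer π (Fin n → Y) := by
  intro ν
  have h' : ∀ i : Fin n, ∃ w : (Fin nP → A) →ₗ[A] Y,
      w ∘ₗ (ker π).subtype = (proj i : (Fin n → Y) →ₗ[A] Y) ∘ₗ ν :=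
    fun i => h ((proj i : (Fin n → Y) →ₗ[A] Y) ∘ₗ ν)
  choose w hw using h'
  refine ⟨LinearMap.pi w, LinearMap.ext fun x => funext fun i => ?_⟩
  have := congrArg (fun g : ↥(ker π) →ₗ[A] Y => g x) (hw i)
  simpa using this

lemma ext_of_extendsFromKer {Y : Type} [AddCommGroup Y] [Module A Y]
    (hπ : Function.Surjective π)
    (h : ExtendsFromKer π Y) : Ext1Vanishes A T Y := by
  intro E _ _ i p hiinj hpsurj hrk
  -- lift π along p using freeness of the cover
  obtain ⟨lam, hlam⟩ := Module.projective_lifting_property p π hpsurj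
  have hlamval : ∀ v, p (lam v) = π v := fun v =>
    congrArg (fun g : (Fin nP → A) →ₗ[A] T => g v) hlam
  have hmemrange : ∀ x : ↥(ker π), lam (x : Fin nP → A) ∈ range i := by
    intro x
    rw [hrk, mem_ker, hlamval, mem_ker.mp x.2]
  set μ : ↥(ker π) →ₗ[A] Y :=
    (LinearEquiv.ofInjective i hiinj).symm.toLinearMap ∘ₗ
      codRestrict (range i) (lam ∘ₗ (ker π).subtype) (fun x => hmemrange x) with hμ
  have hiμ : ∀ x : ↥(ker π), i (μ x) = lam (x : Fin nP → A) := by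
    intro x
    have h4 := (LinearEquiv.ofInjective i hiinj).apply_symm_apply
      (codRestrict (range i) (lam ∘ₗ (ker π).subtype) (fun x => hmemrange x) x)
    have h5 := congrArg (Subtype.val) h4
    exact h5
  obtain ⟨μ', hμ'⟩ := h μ
  set σ : (Fin nP → A) →ₗ[A] E := lam - i ∘ₗ μ' with hσ
  have hker : ker π ≤ ker σ := by
    intro v hv
    rw [mem_ker]
    have h6 : μ' v = μ ⟨v, hv⟩ := congrArg (fun g : ↥(ker π) →ₗ[A] Y => g ⟨v, hv⟩) hμ'
    simp only [hσ, LinearMap.sub_apply, LinearMap.comp_apply, h6, hiμ ⟨v, hv⟩, sub_self]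
  obtain ⟨s, hs⟩ := descend_of_le_ker π hπ σ hker
  refine ⟨s, ?_⟩
  refine LinearMap.ext fun t => ?_
  obtain ⟨v, rfl⟩ := hπ t
  have h7 : s (π v) = σ v := congrArg (fun g : (Fin nP → A) →ₗ[A] E => g v) hs
  have h8 : p (i (μ' v)) = 0 := by
    have : i (μ' v) ∈ ker p := hrk ▸ mem_range_self i (μ' v)
    exact mem_ker.mp this
  simp only [LinearMap.comp_apply, id_apply, h7, hσ, LinearMap.sub_apply, map_sub,
    hlamval, h8, sub_zero]

end Present


section GenLemmas
variable {A : Type} [Ring A]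
variable {T : Type} [AddCommGroup T] [Module A T]
variable {nP : ℕ} {π : (Fin nP → A) →ₗ[A] T}

lemma extendsFromKer_of_gen {X : Type} [AddCommGroup X] [Module A X]
    (hπ : Function.Surjective π) (hproj : Module.Projective A ↥(ker π))
    (hET : Ext1Vanishes A T T) (hgen : IsGenBy A T X) :
    ExtendsFromKer π X := by
  obtain ⟨n, q, hq⟩ := hgen
  exact extendsFromKer_surj hproj (extendsFromKer_pi (extendsFromKer_of_ext hπ hET)) q hq

lemma ext_of_gen {X : Type} [AddCommGroup X] [Module A X]
    (hπ : Function.Surjective π) (hproj : Module.Projective A ↥(ker π))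
    (hET : Ext1Vanishes A T T) (hgen : IsGenBy A T X) :
    Ext1Vanishes A T X :=
  ext_of_extendsFromKer hπ (extendsFromKer_of_gen hπ hproj hET hgen)

/-- The syzygy of a trace epimorphism extends from the kernel. -/
lemma extendsFromKer_ker_trace {M : Type} [AddCommGroup M] [Module A M] {n : ℕ}
    (hπ : Function.Surjective π)
    (p : (Fin n → T) →ₗ[A] M)
    (hspan : ∀ w : T →ₗ[A] M, ∃ h : T →ₗ[A] (Fin n → T), p ∘ₗ h = w)
    (hTall : ExtendsFromKer π (Fin n → T)) :
    ExtendsFromKer π ↥(ker p) := by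
  intro ν
  obtain ⟨ν1, hν1⟩ := hTall ((ker p).subtype ∘ₗ ν)
  have hν1val : ∀ x : ↥(ker π), ν1 (x : Fin nP → A) = (ν x : Fin n → T) := by
    intro x
    exact congrArg (fun g : ↥(ker π) →ₗ[A] (Fin n → T) => g x) hν1
  have hker : ker π ≤ ker (p ∘ₗ ν1) := by
    intro v hv
    rw [mem_ker, LinearMap.comp_apply, hν1val ⟨v, hv⟩]
    exact mem_ker.mp (ν ⟨v, hv⟩).2
  obtain ⟨w, hw⟩ := descend_of_le_ker π hπ (p ∘ₗ ν1) hker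
  obtain ⟨h, hh⟩ := hspan w
  have hcod : ∀ v : Fin nP → A, (ν1 - h ∘ₗ π) v ∈ ker p := by
    intro v
    rw [mem_ker]
    have h1 : p (h (π v)) = w (π v) := congrArg (fun g : T →ₗ[A] M => g (π v)) hh
    have h2 : w (π v) = p (ν1 v) := congrArg (fun g : (Fin nP → A) →ₗ[A] M => g v) hw
    simp only [LinearMap.sub_apply, LinearMap.comp_apply, map_sub, h1, h2, sub_self]
  refine ⟨codRestrict (ker p) (ν1 - h ∘ₗ π) hcod, ?_⟩
  refine LinearMap.ext fun x => Subtype.ext ?_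
  have h3 : π (x : Fin nP → A) = 0 := mem_ker.mp x.2
  simp [hν1val x, h3]

/-- Tilting yields: finitely generated modules with vanishing `Ext¹(T,-)` are
generated by `T`. -/
lemma gen_of_ext {T' T'' X : Type}
    [AddCommGroup T'] [Module A T'] [AddCommGroup T''] [Module A T'']
    [AddCommGroup X] [Module A X]
    (hT'add : InAddOf A T T') (hT''add : InAddOf A T T'')
    (ι : A →ₗ[A] T') (pr : T' →ₗ[A] T'') (hι : Function.Injective ι)
    (hpr : Function.Surjective pr) (hrk : range ι = ker pr)
    (hfin : Module.Finite A X) (hX : Ext1Vanishes A T X) : IsGenBy A T X := by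
  classical
  obtain ⟨m, sm, rm, hm⟩ := hT''add
  have hX'' : Ext1Vanishes A T'' X := ext_summand hX sm rm hm
  have hExt : ∀ f : A →ₗ[A] X, ∃ fb : T' →ₗ[A] X, fb ∘ₗ ι = f :=
    fun f => pushout_extend ι pr hι hpr hrk hX'' f
  obtain ⟨r, φ, hφ⟩ := Module.Finite.exists_fin' A X
  have hfb : ∀ j : Fin r, ∃ fb : T' →ₗ[A] X,
      fb ∘ₗ ι = toSpanSingleton A X (φ (Pi.single j 1)) :=
    fun j => hExt _
  choose fb hfb using hfb
  obtain ⟨n', sT, rT, hsrT⟩ := hT'add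
  set G : (Fin (r * n') → T) →ₗ[A] X :=
    ∑ j : Fin r, (fb j) ∘ₗ rT ∘ₗ
      (funLeft A T (fun i' : Fin n' => finProdFinEquiv (j, i'))) with hG
  refine ⟨r * n', G, ?_⟩
  intro x
  obtain ⟨a, rfl⟩ := hφ x
  refine ⟨fun idx => sT (ι (a (finProdFinEquiv.symm idx).1)) (finProdFinEquiv.symm idx).2, ?_⟩
  have hcoord : ∀ j : Fin r,
      (fun i' : Fin n' => sT (ι (a (finProdFinEquiv.symm (finProdFinEquiv (j, i'))).1))
        (finProdFinEquiv.symm (finProdFinEquiv (j, i'))).2) = sT (ι (a j)) := by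
    intro j
    funext i'
    rw [Equiv.symm_apply_apply]
  have hterm : ∀ j : Fin r,
      (fb j) (rT (sT (ι (a j)))) = a j • φ (Pi.single j 1) := by
    intro j
    have h1 : rT (sT (ι (a j))) = ι (a j) :=
      congrArg (fun g : T' →ₗ[A] T' => g (ι (a j))) hsrT
    have h2 : (fb j) (ι (a j)) = toSpanSingleton A X (φ (Pi.single j 1)) (a j) :=
      congrArg (fun g : A →ₗ[A] X => g (a j)) (hfb j)
    rw [h1, h2, toSpanSingleton_apply]
  have hsum : φ a = ∑ j : Fin r, a j • φ (Pi.single j 1) := by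
    conv_lhs => rw [← Finset.univ_sum_single a]
    rw [map_sum]
    congr 1
    funext j
    rw [← map_smul]
    congr 1
    funext i
    by_cases hij : j = i <;> simp [Pi.single_apply, hij, mul_comm]
  rw [hG]
  simp only [LinearMap.sum_apply, LinearMap.comp_apply]
  have hfl : ∀ j : Fin r, ((funLeft A T fun i' : Fin n' => finProdFinEquiv (j, i'))
      fun idx => sT (ι (a (finProdFinEquiv.symm idx).1)) (finProdFinEquiv.symm idx).2)
      = sT (ι (a j)) := by
    intro j
    funext i'
    simp only [LinearMap.funLeft_apply, Equiv.symm_apply_apply]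
  rw [Finset.sum_congr rfl (fun j _ => by rw [hfl j, hterm j])]
  exact hsum.symm

end GenLemmas

section KPart
variable {k A : Type} [Field k] [Ring A] [Algebra k A] [FiniteDimensional k A]
variable {T : Type} [AddCommGroup T] [Module A T] [Module k T] [IsScalarTower k A T]
variable [Module.Finite A T]

/-- Part 1: `Hom_A(T,M)` is cogenerated by `D(T)` for any finite `M`. -/
lemma part1 (M : Type) [AddCommGroup M] [Module A M] (hMfin : Module.Finite A M) :
    ∃ (n : ℕ) (f : (T →ₗ[A] M) →ₗ[(Module.End A T)ᵐᵒᵖ] (Fin n → (T →ₗ[k] k))),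
      Function.Injective f := by
  letI : Module k M := Module.compHom M (algebraMap k A)
  haveI : IsScalarTower k A M := ⟨fun c a m => by
    show ((c • a) : A) • m = (algebraMap k A c) • (a • m)
    rw [Algebra.smul_def, mul_smul]⟩
  haveI : Module.Finite k M := Module.Finite.trans A M
  haveI : FiniteDimensional k M := inferInstance
  set bM := Module.finBasis k M with hbM
  set d := Module.finrank k M with hd
  refine ⟨d, ?_, ?_⟩
  · exact
    { toFun := fun f => fun i => (bM.coord i) ∘ₗ (f.restrictScalars k)
      map_add' := fun f f' => by
        funext i
        ext t
        simp
      map_smul' := fun b f => by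
        funext i
        ext t
        rfl }
  · intro f f' hff
    ext t
    have h1 : ∀ i, bM.coord i (f t) = bM.coord i (f' t) := by
      intro i
      exact congrArg (fun g : T →ₗ[k] k => g t) (congrFun hff i)
    have := bM.ext_elem_iff.mpr (fun i => by
      simpa [Module.Basis.coord_apply] using h1 i)
    exact this
end KPart

section KPart2
variable {k A : Type} [Field k] [Ring A] [Algebra k A] [FiniteDimensional k A]
variable {T : Type} [AddCommGroup T] [Module A T] [Module k T] [IsScalarTower k A T]
variable [Module.Finite A T]

include k in
/-- The trace epimorphism: a surjection `T^n → M` through which every map `T → M`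
factors. -/
lemma exists_trace (M : Type) [AddCommGroup M] [Module A M]
    (hMfin : Module.Finite A M) (hMgen : IsGenBy A T M) :
    ∃ (n : ℕ) (p : (Fin n → T) →ₗ[A] M), Function.Surjective p ∧
      ∀ w : T →ₗ[A] M, ∃ h : T →ₗ[A] (Fin n → T), p ∘ₗ h = w := by
  classical
  letI : Module k M := Module.compHom M (algebraMap k A)
  haveI : IsScalarTower k A M := ⟨fun c a m => by
    show ((c • a) : A) • m = (algebraMap k A c) • (a • m)
    rw [Algebra.smul_def, mul_smul]⟩
  haveI : Module.Finite k M := Module.Finite.trans A M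
  haveI : SMulCommClass A k M := SMulCommClass.symm k A M
  haveI : SMulCommClass A k T := SMulCommClass.symm k A T
  haveI : Module.Finite k T := Module.Finite.trans A T
  haveI : FiniteDimensional k (T →ₗ[k] M) := inferInstance
  haveI : FiniteDimensional k (T →ₗ[A] M) := FiniteDimensional.of_injective
    (LinearMap.restrictScalarsₗ k A T M k) (LinearMap.restrictScalars_injective k)
  set bH := Module.finBasis k (T →ₗ[A] M) with hbH
  set n := Module.finrank k (T →ₗ[A] M) with hn
  set p : (Fin n → T) →ₗ[A] M := ∑ i : Fin n, (bH i) ∘ₗ (proj i) with hp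
  have hspan : ∀ w : T →ₗ[A] M, ∃ h : T →ₗ[A] (Fin n → T), p ∘ₗ h = w := by
    intro w
    set c := bH.repr w with hc
    refine ⟨LinearMap.pi (fun i => (c i • LinearMap.id : T →ₗ[A] T)), ?_⟩
    refine LinearMap.ext fun t => ?_
    have hsum := bH.sum_repr w
    calc p (fun i => c i • t)
        = ∑ i : Fin n, bH i (c i • t) := by
          rw [hp]
          simp [LinearMap.sum_apply, LinearMap.comp_apply]
      _ = ∑ i : Fin n, c i • (bH i t) := by
          refine Finset.sum_congr rfl fun i _ => ?_
          exact LinearMap.map_smul_of_tower (bH i) (c i) t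
      _ = (∑ i : Fin n, c i • bH i) t := by
          rw [LinearMap.sum_apply]
          refine Finset.sum_congr rfl fun i _ => rfl
      _ = w t := by rw [hsum]
  refine ⟨n, p, ?_, hspan⟩
  intro m
  obtain ⟨nq, q, hq⟩ := hMgen
  obtain ⟨v, rfl⟩ := hq m
  have hv : q v = ∑ i : Fin nq, (q ∘ₗ LinearMap.single A (fun _ : Fin nq => T) i) (v i) := by
    simp only [LinearMap.comp_apply]
    rw [← map_sum]
    congr 1
    exact (Finset.univ_sum_single v).symm
  have hterm : ∀ i : Fin nq, ∃ u : Fin n → T,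
      p u = (q ∘ₗ LinearMap.single A (fun _ : Fin nq => T) i) (v i) := by
    intro i
    obtain ⟨h, hh⟩ := hspan (q ∘ₗ LinearMap.single A (fun _ : Fin nq => T) i)
    exact ⟨h (v i), congrArg (fun g : T →ₗ[A] M => g (v i)) hh⟩
  choose u hu using hterm
  exact ⟨∑ i : Fin nq, u i, by rw [map_sum, hv]; exact Finset.sum_congr rfl fun i _ => hu i⟩

end KPart2

section KPart3
variable {k A : Type} [Field k] [Ring A] [Algebra k A] [FiniteDimensional k A]
variable {T : Type} [AddCommGroup T] [Module A T] [Module k T] [IsScalarTower k A T]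
variable [Module.Finite A T]

include k in
/-- Fullness of `Hom_A(T,-)` on modules generated by `T`. -/
lemma full_exists
    {nP : ℕ} {π : (Fin nP → A) →ₗ[A] T} (hπ : Function.Surjective π)
    (hproj : Module.Projective A ↥(ker π)) (hET : Ext1Vanishes A T T)
    {T' T'' : Type} [AddCommGroup T'] [Module A T'] [AddCommGroup T''] [Module A T'']
    (hT'add : InAddOf A T T') (hT''add : InAddOf A T T'')
    (ι : A →ₗ[A] T') (pr : T' →ₗ[A] T'') (hι : Function.Injective ι)
    (hpr : Function.Surjective pr) (hrk : range ι = ker pr)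
    (M M' : Type) [AddCommGroup M] [Module A M] [AddCommGroup M'] [Module A M']
    (hMfin : Module.Finite A M) (hMgen : IsGenBy A T M)
    (Φ : (T →ₗ[A] M) →ₗ[(Module.End A T)ᵐᵒᵖ] (T →ₗ[A] M')) :
    ∃ g : M →ₗ[A] M', ∀ f : T →ₗ[A] M, g ∘ₗ f = Φ f := by
  classical
  obtain ⟨n, p, hpsurj, hspan⟩ := exists_trace (k := k) M hMfin hMgen
  set sg : Fin n → (T →ₗ[A] (Fin n → T)) :=
    fun i => LinearMap.single A (fun _ : Fin n => T) i with hsg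
  set gt : (Fin n → T) →ₗ[A] M' :=
    ∑ i : Fin n, (Φ (p ∘ₗ sg i)) ∘ₗ (proj i) with hgt
  have hkey : ∀ cc : T →ₗ[A] (Fin n → T), gt ∘ₗ cc = Φ (p ∘ₗ cc) := by
    intro cc
    have hdecomp : p ∘ₗ cc = ∑ i : Fin n, ((p ∘ₗ sg i) ∘ₗ ((proj i :
        (Fin n → T) →ₗ[A] T) ∘ₗ cc)) := by
      refine LinearMap.ext fun t => ?_
      rw [LinearMap.sum_apply]
      simp only [LinearMap.comp_apply, hsg, proj_apply]
      rw [← map_sum]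
      congr 1
      exact (Finset.univ_sum_single (cc t)).symm
    calc gt ∘ₗ cc = ∑ i : Fin n, (Φ (p ∘ₗ sg i)) ∘ₗ ((proj i :
          (Fin n → T) →ₗ[A] T) ∘ₗ cc) := by
          refine LinearMap.ext fun t => ?_
          rw [hgt]
          simp only [LinearMap.sum_apply, LinearMap.comp_apply, proj_apply]
      _ = ∑ i : Fin n, Φ ((p ∘ₗ sg i) ∘ₗ ((proj i : (Fin n → T) →ₗ[A] T) ∘ₗ cc)) := by
          refine Finset.sum_congr rfl fun i _ => ?_
          have hs := Φ.map_smul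
            (MulOpposite.op ((proj i : (Fin n → T) →ₗ[A] T) ∘ₗ cc)) (p ∘ₗ sg i)
          simpa [homEndOp_smul_def] using hs.symm
      _ = Φ (p ∘ₗ cc) := by rw [← map_sum, ← hdecomp]
  -- the kernel of the trace map is generated by T
  have hextK : Ext1Vanishes A T ↥(ker p) :=
    ext_of_extendsFromKer hπ (extendsFromKer_ker_trace hπ p hspan
      (extendsFromKer_pi (extendsFromKer_of_ext hπ hET)))
  haveI : IsNoetherian k A := IsNoetherian.iff_fg.mpr inferInstance
  haveI : IsNoetherianRing A := isNoetherianRing_iff.mpr (isNoetherian_of_tower k ‹_›)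
  haveI : IsNoetherian A (Fin n → T) :=
    isNoetherian_of_isNoetherianRing_of_finite A (Fin n → T)
  have hfinK : Module.Finite A ↥(ker p) :=
    Module.Finite.iff_fg.mpr (IsNoetherian.noetherian (ker p))
  have hgenK : IsGenBy A T ↥(ker p) :=
    gen_of_ext hT'add hT''add ι pr hι hpr hrk hfinK hextK
  have hKkill : ker p ≤ ker gt := by
    intro x hx
    obtain ⟨s1, ρ, hρ⟩ := hgenK
    obtain ⟨y, hy⟩ := hρ ⟨x, hx⟩
    have hx2 : x = ∑ j : Fin s1,
        ((ker p).subtype ∘ₗ ρ ∘ₗ LinearMap.single A (fun _ : Fin s1 => T) j) (y j) := by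
      simp only [LinearMap.comp_apply, LinearMap.coe_single]
      rw [← map_sum, ← map_sum, Finset.univ_sum_single, hy]
      rfl
    rw [mem_ker, hx2, map_sum]
    refine Finset.sum_eq_zero fun j _ => ?_
    have hcj : gt ∘ₗ ((ker p).subtype ∘ₗ ρ ∘ₗ LinearMap.single A (fun _ : Fin s1 => T) j)
        = 0 := by
      rw [hkey]
      have hzero : p ∘ₗ ((ker p).subtype ∘ₗ ρ ∘ₗ LinearMap.single A (fun _ : Fin s1 => T) j)
          = 0 := by
        refine LinearMap.ext fun t => ?_
        simp only [LinearMap.comp_apply, LinearMap.zero_apply]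
        exact mem_ker.mp (ρ (Pi.single j t)).2
      rw [hzero, map_zero]
    exact congrArg (fun g : T →ₗ[A] M' => g (y j)) hcj
  obtain ⟨g, hg⟩ := descend_of_le_ker p hpsurj gt hKkill
  refine ⟨g, fun f => ?_⟩
  obtain ⟨h, hh⟩ := hspan f
  rw [← hh, ← LinearMap.comp_assoc, hg, hkey]

end KPart3

section BSide
variable {A : Type} [Ring A]
variable {T : Type} [AddCommGroup T] [Module A T]

/-- `Hom_A(T, T^n)` is a free `B`-module of rank `n`. -/
noncomputable def freeHomEquiv (n : ℕ) :
    (Fin n → (Module.End A T)ᵐᵒᵖ) ≃ₗ[(Module.End A T)ᵐᵒᵖ] (T →ₗ[A] (Fin n → T)) where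
  toFun b := LinearMap.pi (fun i => (b i).unop)
  invFun f := fun i => MulOpposite.op ((proj i : (Fin n → T) →ₗ[A] T) ∘ₗ f)
  left_inv b := by
    funext i
    apply MulOpposite.unop_injective
    rfl
  right_inv f := by
    refine LinearMap.ext fun t => funext fun i => ?_
    rfl
  map_add' b c := by
    refine LinearMap.ext fun t => funext fun i => ?_
    rfl
  map_smul' c b := by
    refine LinearMap.ext fun t => funext fun i => ?_
    show ((c * b i).unop) t = (LinearMap.pi (fun i => (b i).unop)) (c.unop t) i
    rw [MulOpposite.unop_mul]
    rfl

end BSide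

section PsiEval
variable {k A : Type} [Field k] [Ring A] [Algebra k A]
variable {T : Type} [AddCommGroup T] [Module A T] [Module k T] [IsScalarTower k A T]

/-- Every `B`-linear functional `Hom_A(T,T^n) → D(T)` is given by evaluation
against a `k`-functional on `T^n`. -/
lemma psi_eval {n : ℕ}
    (ψ : (T →ₗ[A] (Fin n → T)) →ₗ[(Module.End A T)ᵐᵒᵖ] (T →ₗ[k] k))
    (f : T →ₗ[A] (Fin n → T)) (t : T) :
    ψ f t = ∑ i : Fin n,
      ψ (LinearMap.single A (fun _ : Fin n => T) i) ((f t) i) := by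
  classical
  have hdecomp : f = ∑ i : Fin n,
      (MulOpposite.op ((proj i : (Fin n → T) →ₗ[A] T) ∘ₗ f)) •
        (LinearMap.single A (fun _ : Fin n => T) i) := by
    refine LinearMap.ext fun t' => funext fun i' => ?_
    rw [LinearMap.sum_apply]
    have : ∀ i : Fin n, ((MulOpposite.op ((proj i : (Fin n → T) →ₗ[A] T) ∘ₗ f)) •
        (LinearMap.single A (fun _ : Fin n => T) i)) t'
        = Pi.single i (f t' i) := by
      intro i
      rw [homEndOp_smul_def]
      rfl
    rw [Finset.sum_apply]
    simp only [this]
    have h2 := congrFun (Finset.univ_sum_single (f t')) i'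
    rw [Finset.sum_apply] at h2
    exact h2.symm
  conv_lhs => rw [hdecomp]
  rw [map_sum, LinearMap.sum_apply]
  refine Finset.sum_congr rfl fun i _ => ?_
  rw [map_smul]
  rfl

end PsiEval

section BNoeth
variable {k A : Type} [Field k] [Ring A] [Algebra k A] [FiniteDimensional k A]
variable {T : Type} [AddCommGroup T] [Module A T] [Module k T] [IsScalarTower k A T]
variable [Module.Finite A T]

include k in
lemma bNoetherian : IsNoetherianRing (Module.End A T)ᵐᵒᵖ := by
  haveI : SMulCommClass A k T := SMulCommClass.symm k A T
  haveI : Module.Finite k T := Module.Finite.trans A T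
  haveI : FiniteDimensional k (Module.End A T) := FiniteDimensional.of_injective
    (LinearMap.restrictScalarsₗ k A T T k) (LinearMap.restrictScalars_injective k)
  haveI : FiniteDimensional k (Module.End A T)ᵐᵒᵖ :=
    LinearEquiv.finiteDimensional (MulOpposite.opLinearEquiv k :
      Module.End A T ≃ₗ[k] (Module.End A T)ᵐᵒᵖ)
  haveI : IsScalarTower k (Module.End A T)ᵐᵒᵖ (Module.End A T)ᵐᵒᵖ := by
    refine ⟨fun c x y => ?_⟩
    apply MulOpposite.unop_injective
    show y.unop ∘ₗ (MulOpposite.unop (c • x)) = MulOpposite.unop (c • (x * y))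
    rw [MulOpposite.unop_smul, MulOpposite.unop_smul, MulOpposite.unop_mul]
    refine LinearMap.ext fun t => ?_
    simp only [LinearMap.comp_apply, LinearMap.smul_apply]
    exact LinearMap.map_smul_of_tower y.unop c (x.unop t)
  haveI : IsNoetherian k (Module.End A T)ᵐᵒᵖ := IsNoetherian.iff_fg.mpr inferInstance
  exact isNoetherianRing_iff.mpr (isNoetherian_of_tower k ‹_›)

end BNoeth


/-- **First Brenner–Butler equivalence.**  If `T` is a tilting module over the
finite-dimensional algebra `A` and `B = End_A(T)ᵒᵖ`, then `Hom_A(T,−)` restricts to an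
equivalence between the class `𝒯` of `A`-modules generated by `T` and the class `𝒴` of
`B`-modules cogenerated by `D(T)` (equivalently, with `Tor₁^B(T,−) = 0`): it maps `𝒯`
into `𝒴`, is fully faithful on `𝒯`, and is essentially surjective onto `𝒴`. -/
theorem brenner_butler_hom_equivalence
    (k A : Type) [Field k] [Ring A] [Algebra k A] [FiniteDimensional k A]
    (T : Type) [AddCommGroup T] [Module A T] [Module k T] [IsScalarTower k A T]
    [Module.Finite A T]
    (hT : IsTiltingModule A T) :
    -- Hom_A(T, −) sends 𝒯 into 𝒴
    (∀ (M : Type) [AddCommGroup M] [Module A M], Module.Finite A M → IsGenBy A T M →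
      IsCogenBy (Module.End A T)ᵐᵒᵖ (T →ₗ[k] k) (T →ₗ[A] M)) ∧
    -- Hom_A(T, −) is fully faithful on 𝒯
    (∀ (M M' : Type) [AddCommGroup M] [Module A M] [AddCommGroup M'] [Module A M'],
      Module.Finite A M → Module.Finite A M' → IsGenBy A T M → IsGenBy A T M' →
      Function.Bijective (fun g : M →ₗ[A] M' => homMapB (T := T) g)) ∧
    -- Hom_A(T, −) is essentially surjective onto 𝒴
    (∀ (N : Type) [AddCommGroup N] [Module (Module.End A T)ᵐᵒᵖ N],
      Module.Finite (Module.End A T)ᵐᵒᵖ N →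
      IsCogenBy (Module.End A T)ᵐᵒᵖ (T →ₗ[k] k) N →
      ∃ (M : ModuleCat.{0} A), Module.Finite A M ∧ IsGenBy A T M ∧
        Nonempty (N ≃ₗ[(Module.End A T)ᵐᵒᵖ] ((T : Type) →ₗ[A] M))) := by
  classical
  obtain ⟨⟨nP, π, hπ, hproj⟩, hET, T'c, T''c, hT'add, hT''add, ι, pr, hι, hpr, hrk⟩ := hT
  refine ⟨?_, ?_, ?_⟩
  · -- Part 1
    intro M _ _ hMfin _hMgen
    exact part1 (k := k) M hMfin
  · -- Part 2
    intro M M' _ _ _ _ hMfin hM'fin hMgen hM'gen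
    constructor
    · -- faithful
      intro g g' hgg
      have hpt : ∀ f : T →ₗ[A] M, g ∘ₗ f = g' ∘ₗ f := by
        intro f
        exact congrArg (fun Ψ : (T →ₗ[A] M) →ₗ[(Module.End A T)ᵐᵒᵖ] (T →ₗ[A] M') =>
          Ψ f) hgg
      obtain ⟨nq, q, hq⟩ := hMgen
      refine LinearMap.ext fun m => ?_
      obtain ⟨v, rfl⟩ := hq m
      have hv : q v = ∑ i : Fin nq,
          (q ∘ₗ LinearMap.single A (fun _ : Fin nq => T) i) (v i) := by
        simp only [LinearMap.comp_apply, LinearMap.coe_single]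
        rw [← map_sum, Finset.univ_sum_single]
      rw [hv, map_sum, map_sum]
      refine Finset.sum_congr rfl fun i _ => ?_
      exact congrArg (fun w : T →ₗ[A] M' => w (v i))
        (hpt (q ∘ₗ LinearMap.single A (fun _ : Fin nq => T) i))
    · -- full
      intro Φ
      obtain ⟨g, hg⟩ := full_exists (k := k) hπ hproj hET hT'add hT''add ι pr hι hpr hrk
        M M' hMfin hMgen Φ
      exact ⟨g, LinearMap.ext fun f => hg f⟩
  · -- Part 3
    intro N _ _ hNfin hNcogen
    obtain ⟨m, ιN, hιN⟩ := hNcogen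
    haveI := hNfin
    haveI hBnoeth : IsNoetherianRing (Module.End A T)ᵐᵒᵖ := bNoetherian (k := k)
    obtain ⟨n0, ρ0, hρ0⟩ := Module.Finite.exists_fin' (Module.End A T)ᵐᵒᵖ N
    set Z := ker ρ0 with hZ
    haveI : IsNoetherian (Module.End A T)ᵐᵒᵖ (Fin n0 → (Module.End A T)ᵐᵒᵖ) :=
      isNoetherian_of_isNoetherianRing_of_finite _ _
    haveI hZfin : Module.Finite (Module.End A T)ᵐᵒᵖ ↥Z :=
      Module.Finite.iff_fg.mpr (IsNoetherian.noetherian Z)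
    obtain ⟨n1, ρ1, hρ1⟩ := Module.Finite.exists_fin' (Module.End A T)ᵐᵒᵖ ↥Z
    set β0 := freeHomEquiv (A := A) (T := T) n0 with hβ0
    set β1 := freeHomEquiv (A := A) (T := T) n1 with hβ1
    set π₀ : (T →ₗ[A] (Fin n0 → T)) →ₗ[(Module.End A T)ᵐᵒᵖ] N :=
      ρ0 ∘ₗ β0.symm.toLinearMap with hπ₀
    have hπ₀surj : Function.Surjective π₀ := hρ0.comp β0.symm.surjective
    set Φb : (T →ₗ[A] (Fin n1 → T)) →ₗ[(Module.End A T)ᵐᵒᵖ] (T →ₗ[A] (Fin n0 → T)) :=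
      β0.toLinearMap ∘ₗ Z.subtype ∘ₗ ρ1 ∘ₗ β1.symm.toLinearMap with hΦb
    have hkerrange : ∀ f, (π₀ f = 0 ↔ f ∈ range Φb) := by
      intro f
      constructor
      · intro h0
        have hz : β0.symm f ∈ Z := by rw [hZ, mem_ker]; exact h0
        obtain ⟨u, hu⟩ := hρ1 ⟨β0.symm f, hz⟩
        refine ⟨β1 u, ?_⟩
        show β0 (Z.subtype (ρ1 (β1.symm (β1 u)))) = f
        rw [LinearEquiv.symm_apply_apply, hu]
        exact β0.apply_symm_apply f
      · rintro ⟨h1, rfl⟩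
        show ρ0 (β0.symm (β0 (Z.subtype (ρ1 (β1.symm h1))))) = 0
        rw [LinearEquiv.symm_apply_apply]
        exact mem_ker.mp (ρ1 (β1.symm h1)).2
    have hgenT1 : IsGenBy A T (Fin n1 → T) := ⟨n1, LinearMap.id, surjective_id⟩
    obtain ⟨g, hg⟩ := full_exists (k := k) hπ hproj hET hT'add hT''add ι pr hι hpr hrk
      (Fin n1 → T) (Fin n0 → T) inferInstance hgenT1 Φb
    set K := range g with hK
    set MM := (Fin n0 → T) ⧸ K with hMM
    set χ : (T →ₗ[A] (Fin n0 → T)) →ₗ[(Module.End A T)ᵐᵒᵖ] (T →ₗ[A] MM) :=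
      homMapB (T := T) K.mkQ with hχ
    have hgenK : IsGenBy A T ↥K := ⟨n1, g.rangeRestrict, surjective_rangeRestrict g⟩
    have hextK : Ext1Vanishes A T ↥K := ext_of_gen hπ hproj hET hgenK
    have hextK' : Ext1Vanishes A T ↥(ker K.mkQ) :=
      ext_congr hextK (LinearEquiv.ofEq _ _ (Submodule.ker_mkQ K).symm)
    have hχsurj : Function.Surjective χ := by
      intro f
      obtain ⟨h, hh⟩ := lift_of_ext K.mkQ (Submodule.mkQ_surjective K) hextK' f
      exact ⟨h, hh⟩
    have hker : ∀ f, (χ f = 0 ↔ π₀ f = 0) := by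
      intro f
      constructor
      · intro hχ0
        have hrange : ∀ t : T, f t ∈ K := by
          intro t
          have h2 : K.mkQ (f t) = 0 :=
            congrArg (fun w : T →ₗ[A] MM => w t) hχ0
          rwa [Submodule.mkQ_apply, Submodule.Quotient.mk_eq_zero] at h2
        set ψ : Fin m → ((T →ₗ[A] (Fin n0 → T)) →ₗ[(Module.End A T)ᵐᵒᵖ] (T →ₗ[k] k)) :=
          fun j => (proj j : (Fin m → (T →ₗ[k] k)) →ₗ[(Module.End A T)ᵐᵒᵖ]
            (T →ₗ[k] k)) ∘ₗ ιN ∘ₗ π₀ with hψ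
        have hψzero : ∀ (j : Fin m) (h1 : T →ₗ[A] (Fin n1 → T)), ψ j (Φb h1) = 0 := by
          intro j h1
          have h3 : π₀ (Φb h1) = 0 := by
            rw [hkerrange (Φb h1)]
            exact ⟨h1, rfl⟩
          show (ιN (π₀ (Φb h1))) j = 0
          rw [h3, map_zero]
          rfl
        have hθg : ∀ (j : Fin m) (y : Fin n1 → T),
            (∑ i : Fin n0, ψ j (LinearMap.single A (fun _ : Fin n0 => T) i) ((g y) i))
              = 0 := by
          intro j y
          have hy : g y = ∑ l : Fin n1, g (Pi.single l (y l)) := by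
            rw [← map_sum, Finset.univ_sum_single]
          calc (∑ i : Fin n0, ψ j (LinearMap.single A (fun _ : Fin n0 => T) i) ((g y) i))
              = ∑ i : Fin n0, ∑ l : Fin n1, ψ j (LinearMap.single A (fun _ : Fin n0 => T) i)
                ((g (Pi.single l (y l))) i) := by
                refine Finset.sum_congr rfl fun i _ => ?_
                rw [hy, Finset.sum_apply, map_sum]
            _ = ∑ l : Fin n1, ∑ i : Fin n0, ψ j (LinearMap.single A (fun _ : Fin n0 => T) i)
                ((g (Pi.single l (y l))) i) := Finset.sum_comm
            _ = ∑ l : Fin n1, ψ j (g ∘ₗ LinearMap.single A (fun _ : Fin n1 => T) l) (y l) := by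
                refine Finset.sum_congr rfl fun l _ => ?_
                exact (psi_eval (ψ j) (g ∘ₗ LinearMap.single A (fun _ : Fin n1 => T) l)
                  (y l)).symm
            _ = 0 := by
                refine Finset.sum_eq_zero fun l _ => ?_
                rw [hg (LinearMap.single A (fun _ : Fin n1 => T) l)]
                rw [hψzero j (LinearMap.single A (fun _ : Fin n1 => T) l)]
                rfl
        have hval : ιN (π₀ f) = 0 := by
          refine funext fun j => ?_
          refine LinearMap.ext fun t => ?_
          have h3 : (ιN (π₀ f)) j t = ∑ i : Fin n0,
              ψ j (LinearMap.single A (fun _ : Fin n0 => T) i) ((f t) i) :=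
            psi_eval (ψ j) f t
          obtain ⟨y, hy2⟩ := hrange t
          rw [Pi.zero_apply] at *
          show (ιN (π₀ f)) j t = (0 : T →ₗ[k] k) t
          rw [h3, ← hy2]
          rw [hθg j y]
          rfl
        apply hιN
        rw [hval, map_zero]
      · intro h0
        obtain ⟨h1, rfl⟩ := (hkerrange f).mp h0
        refine LinearMap.ext fun t => ?_
        show K.mkQ ((Φb h1) t) = 0
        rw [← hg h1]
        show K.mkQ ((g ∘ₗ h1) t) = 0
        rw [LinearMap.comp_apply, Submodule.mkQ_apply, Submodule.Quotient.mk_eq_zero]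
        exact ⟨h1 t, rfl⟩
    have hkereq : ker χ = ker π₀ := by
      ext f
      rw [mem_ker, mem_ker]
      exact hker f
    refine ⟨ModuleCat.of A MM, ?_, ⟨n0, K.mkQ, Submodule.mkQ_surjective K⟩, ?_⟩
    · exact Module.Finite.of_surjective K.mkQ (Submodule.mkQ_surjective K)
    · exact ⟨((LinearMap.quotKerEquivOfSurjective π₀ hπ₀surj).symm.trans
        ((Submodule.quotEquivOfEq _ _ hkereq.symm).trans
          (LinearMap.quotKerEquivOfSurjective χ hχsurj)))⟩
end

section
/- Let T be a tilting module over a finite-dimensional algebra A and B = End_A(T)^op. Then the pair (T, F), where T = {M : Ext^1_A(T,M) = 0} and F = {M : Hom_A(T,M) = 0}, is a torsion pair in mod A: Hom_A(X,Y) = 0 for all X ∈ T, Y ∈ F, and every A-module M has a short exact sequence 0 → tM → M → M/tM → 0 with tM ∈ T and M/tM ∈ F. -/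
open LinearMap Function

section Helpers2

variable {A : Type} [Ring A]

/-- Factor a map through a surjection whose kernel it kills. -/
lemma factor_through_surjective {M Z E : Type} [AddCommGroup M] [Module A M]
    [AddCommGroup Z] [Module A Z] [AddCommGroup E] [Module A E]
    (g : M →ₗ[A] Z) (hg : Function.Surjective g) (u : M →ₗ[A] E)
    (hker : LinearMap.ker g ≤ LinearMap.ker u) :
    ∃ s : Z →ₗ[A] E, s ∘ₗ g = u := by
  let e := g.quotKerEquivOfSurjective hg
  refine ⟨(LinearMap.ker g).liftQ u hker ∘ₗ (e.symm : Z →ₗ[A] _), ?_⟩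
  ext a
  have h1 : e.symm (g a) = Submodule.Quotient.mk a := by
    rw [LinearEquiv.symm_apply_eq]
    simp [e, LinearMap.quotKerEquivOfSurjective, LinearMap.quotKerEquivRange_apply_mk]
  simp [h1]


/-- Pullback: lift a map through the quotient of an extension when Ext¹ vanishes. -/
lemma lift_of_ext1 {X E Z W : Type} [AddCommGroup X] [Module A X] [AddCommGroup E] [Module A E]
    [AddCommGroup Z] [Module A Z] [AddCommGroup W] [Module A W]
    (hext : Ext1Vanishes A W X)
    (i : X →ₗ[A] E) (p : E →ₗ[A] Z) (hi : Injective i) (hp : Surjective p)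
    (hex : LinearMap.range i = LinearMap.ker p) (h : W →ₗ[A] Z) :
    ∃ l : W →ₗ[A] E, p ∘ₗ l = h := by
  have hpi : ∀ x, p (i x) = 0 := fun x => by
    have : i x ∈ LinearMap.ker p := hex ▸ LinearMap.mem_range_self i x
    simpa using this
  set P : Submodule A (E × W) :=
    LinearMap.ker ((p ∘ₗ LinearMap.fst A E W) - (h ∘ₗ LinearMap.snd A E W)) with hP
  have memP : ∀ e w, p e = h w → (e, w) ∈ P := fun e w hw => by
    simp [hP, LinearMap.mem_ker, hw]
  have memP' : ∀ x : P, p (x : E × W).1 = h (x : E × W).2 := fun x => by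
    have := x.2
    simp only [hP, LinearMap.mem_ker, LinearMap.sub_apply, LinearMap.comp_apply,
      LinearMap.fst_apply, LinearMap.snd_apply, sub_eq_zero] at this
    exact this
  set iP : X →ₗ[A] P :=
    LinearMap.codRestrict P (LinearMap.prod i 0)
      (fun x => memP _ _ (by simp [hpi x])) with hiPdef
  set pP : P →ₗ[A] W := LinearMap.snd A E W ∘ₗ P.subtype with hpPdef
  have hiP : Injective iP := by
    intro x y hxy
    apply hi
    exact congrArg (fun z : P => (z : E × W).1) hxy
  have hpP : Surjective pP := by
    intro w
    obtain ⟨e, he⟩ := hp (h w)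
    exact ⟨⟨(e, w), memP e w he⟩, rfl⟩
  have hexP : LinearMap.range iP = LinearMap.ker pP := by
    apply le_antisymm
    · rintro _ ⟨x, rfl⟩
      simp [hpPdef, hiPdef, LinearMap.mem_ker]
      rfl
    · rintro ⟨⟨e, w⟩, hm⟩ hk
      have hw : w = 0 := hk
      subst hw
      have hpe : p e = 0 := by simpa using memP' ⟨(e, 0), hm⟩
      have : e ∈ LinearMap.range i := hex ▸ hpe
      obtain ⟨x, rfl⟩ := this
      exact ⟨x, Subtype.ext (by simp [hiPdef]; rfl)⟩
  obtain ⟨s, hs⟩ := hext P iP pP hiP hpP hexP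
  refine ⟨LinearMap.fst A E W ∘ₗ P.subtype ∘ₗ s, ?_⟩
  ext w
  have h2 : pP (s w) = w := congrArg (fun f : W →ₗ[A] W => f w) hs
  have h3 := memP' (s w)
  simp only [hpPdef, LinearMap.comp_apply, LinearMap.snd_apply, Submodule.subtype_apply] at h2
  simp only [LinearMap.comp_apply, LinearMap.fst_apply, Submodule.subtype_apply]
  rw [h3, h2]


/-- Pushout: extend a map along an injection when Ext¹ of the cokernel vanishes. -/
lemma extend_of_ext1 {M₀ M₁ M₂ X : Type} [AddCommGroup M₀] [Module A M₀]
    [AddCommGroup M₁] [Module A M₁] [AddCommGroup M₂] [Module A M₂]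
    [AddCommGroup X] [Module A X]
    (i : M₀ →ₗ[A] M₁) (p : M₁ →ₗ[A] M₂) (hi : Injective i) (hp : Surjective p)
    (hex : LinearMap.range i = LinearMap.ker p) (hext : Ext1Vanishes A M₂ X)
    (χ : M₀ →ₗ[A] X) : ∃ φ : M₁ →ₗ[A] X, φ ∘ₗ i = χ := by
  have hpi : ∀ a, p (i a) = 0 := fun a => by
    have : i a ∈ LinearMap.ker p := hex ▸ LinearMap.mem_range_self i a
    simpa using this
  set N : Submodule A (M₁ × X) := LinearMap.range (LinearMap.prod i (-χ)) with hN
  set iQ : X →ₗ[A] (M₁ × X) ⧸ N := N.mkQ ∘ₗ LinearMap.inr A M₁ X with hiQdef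
  have hNker : N ≤ LinearMap.ker (p ∘ₗ LinearMap.fst A M₁ X) := by
    rintro _ ⟨a, rfl⟩
    simp [LinearMap.mem_ker, hpi a]
  set pQ : (M₁ × X) ⧸ N →ₗ[A] M₂ := N.liftQ (p ∘ₗ LinearMap.fst A M₁ X) hNker with hpQdef
  have hiQ : Injective iQ := by
    have : ∀ x : X, iQ x = 0 → x = 0 := by
      intro x hx
      have hmem : ((0 : M₁), x) ∈ N := by
        rw [← Submodule.Quotient.mk_eq_zero]
        simpa [hiQdef, Submodule.mkQ_apply] using hx
      obtain ⟨a, ha⟩ := hmem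
      have ha1 : i a = 0 := congrArg Prod.fst ha
      have ha0 : a = 0 := hi (by simpa using ha1)
      have ha2 : -χ a = x := congrArg Prod.snd ha
      rw [ha0] at ha2
      simpa using ha2.symm
    intro x y hxy
    have := this (x - y) (by rw [map_sub, hxy, sub_self])
    exact sub_eq_zero.mp this
  have hpQ : Surjective pQ := by
    intro z
    obtain ⟨m, hm⟩ := hp z
    exact ⟨Submodule.Quotient.mk (m, 0), by simpa [hpQdef, Submodule.liftQ_apply] using hm⟩
  have hexQ : LinearMap.range iQ = LinearMap.ker pQ := by
    apply le_antisymm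
    · rintro _ ⟨x, rfl⟩
      simp [hiQdef, hpQdef, LinearMap.mem_ker]
    · intro qq hq
      obtain ⟨⟨m1, x⟩, rfl⟩ := Submodule.Quotient.mk_surjective N qq
      have hpm : p m1 = 0 := by simpa [hpQdef, LinearMap.mem_ker] using hq
      have : m1 ∈ LinearMap.range i := hex ▸ hpm
      obtain ⟨a, rfl⟩ := this
      refine ⟨x + χ a, ?_⟩
      show (Submodule.Quotient.mk ((0 : M₁), x + χ a) : (M₁ × X) ⧸ N) = _
      rw [Submodule.Quotient.eq]
      exact ⟨-a, by simp [Prod.ext_iff]⟩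
  obtain ⟨s, hs⟩ := hext _ iQ pQ hiQ hpQ hexQ
  have hsap : ∀ z, pQ (s z) = z := fun z => congrArg (fun f : M₂ →ₗ[A] M₂ => f z) hs
  set ρ : M₁ →ₗ[A] (M₁ × X) ⧸ N := N.mkQ ∘ₗ LinearMap.inl A M₁ X - s ∘ₗ p with hρdef
  have hρ : ∀ m, ρ m ∈ LinearMap.range iQ := by
    intro m
    rw [hexQ]
    simp [hρdef, hpQdef, LinearMap.mem_ker, hsap, Submodule.liftQ_apply]
    exact sub_eq_zero.mpr (hsap (p m)).symm
  set eIQ := LinearEquiv.ofInjective iQ hiQ with heIQ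
  refine ⟨(eIQ.symm : LinearMap.range iQ →ₗ[A] X) ∘ₗ
    LinearMap.codRestrict (LinearMap.range iQ) ρ hρ, ?_⟩
  ext a
  have hρia : ρ (i a) = iQ (χ a) := by
    have h0 : s (p (i a)) = 0 := by rw [hpi a, map_zero]
    have heq : (Submodule.Quotient.mk ((i a : M₁), (0 : X)) : (M₁ × X) ⧸ N)
        = Submodule.Quotient.mk ((0 : M₁), χ a) := by
      rw [Submodule.Quotient.eq]
      exact ⟨a, by simp [Prod.ext_iff]⟩
    simp only [hρdef, LinearMap.sub_apply, LinearMap.comp_apply, LinearMap.inl_apply,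
      Submodule.mkQ_apply, h0, sub_zero]
    simpa [hiQdef] using heq
  have : LinearMap.codRestrict (LinearMap.range iQ) ρ hρ (i a) = eIQ (χ a) := by
    apply Subtype.ext
    simp only [LinearMap.codRestrict_apply, hρia, heIQ]
    exact (LinearEquiv.ofInjective_apply iQ (χ a)).symm
  simp only [LinearMap.comp_apply, this]
  exact eIQ.symm_apply_apply (χ a)


/-- Retracts inherit Ext¹-vanishing in the first argument. -/
lemma ext1_retract {W W' X : Type} [AddCommGroup W] [Module A W] [AddCommGroup W'] [Module A W']
    [AddCommGroup X] [Module A X]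
    (f : W →ₗ[A] W') (g : W' →ₗ[A] W) (hfg : g ∘ₗ f = LinearMap.id)
    (hext : Ext1Vanishes A W' X) : Ext1Vanishes A W X := by
  intro E _ _ i p hi hp hex
  obtain ⟨l, hl⟩ := lift_of_ext1 hext i p hi hp hex g
  refine ⟨l ∘ₗ f, ?_⟩
  rw [← LinearMap.comp_assoc, hl, hfg]

/-- Ext¹-vanishing passes to finite powers in the first argument. -/
lemma ext1_pi_left {T X : Type} [AddCommGroup T] [Module A T] [AddCommGroup X] [Module A X]
    (hext : Ext1Vanishes A T X) (n : ℕ) : Ext1Vanishes A (Fin n → T) X := by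
  intro E _ _ i p hi hp hex
  have hl : ∀ j : Fin n, ∃ l : T →ₗ[A] E,
      p ∘ₗ l = LinearMap.single A (fun _ : Fin n => T) j :=
    fun j => lift_of_ext1 hext i p hi hp hex _
  choose l hl using hl
  refine ⟨∑ j, l j ∘ₗ LinearMap.proj j, ?_⟩
  apply LinearMap.ext; intro v
  have : ∀ j, p (l j (v j)) = Pi.single j (v j) := fun j =>
    congrArg (fun f : T →ₗ[A] (Fin n → T) => f (v j)) (hl j)
  simp only [LinearMap.comp_apply, LinearMap.id_apply, LinearMap.coe_sum, Finset.sum_apply,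
    LinearMap.proj_apply, map_sum, this]
  exact Finset.univ_sum_single v

/-- Ext¹-vanishing passes to finite powers in the second argument. -/
lemma ext1_pi_right {Z Y : Type} [AddCommGroup Z] [Module A Z] [AddCommGroup Y] [Module A Y]
    (hext : Ext1Vanishes A Z Y) (n : ℕ) : Ext1Vanishes A Z (Fin n → Y) := by
  intro E _ _ i p hi hp hex
  have hr : ∀ j : Fin n, ∃ r : E →ₗ[A] Y,
      r ∘ₗ i = LinearMap.proj j :=
    fun j => extend_of_ext1 i p hi hp hex hext _
  choose r hr using hr
  set rr : E →ₗ[A] (Fin n → Y) := LinearMap.pi r with hrr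
  have hri : ∀ y, rr (i y) = y := by
    intro y
    funext j
    exact congrArg (fun f : (Fin n → Y) →ₗ[A] Y => f y) (hr j)
  set ρ : E →ₗ[A] E := LinearMap.id - i ∘ₗ rr with hρ
  have hker : LinearMap.ker p ≤ LinearMap.ker ρ := by
    intro e he
    have : e ∈ LinearMap.range i := hex ▸ he
    obtain ⟨y, rfl⟩ := this
    simp [hρ, LinearMap.mem_ker, hri]
  obtain ⟨s, hs⟩ := factor_through_surjective p hp ρ hker
  refine ⟨s, ?_⟩
  ext z
  obtain ⟨e, rfl⟩ := hp z
  have h1 : s (p e) = ρ e := congrArg (fun f : E →ₗ[A] E => f e) hs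
  have hpi : ∀ y, p (i y) = 0 := fun y => by
    have : i y ∈ LinearMap.ker p := hex ▸ LinearMap.mem_range_self i y
    simpa using this
  simp [h1, hρ, hpi]

/-- Maps out of a finite power of `T` vanish if all maps out of `T` vanish. -/
lemma hom_pi_zero {T Y : Type} [AddCommGroup T] [Module A T] [AddCommGroup Y] [Module A Y]
    (h : ∀ g : T →ₗ[A] Y, g = 0) (n : ℕ) (u : (Fin n → T) →ₗ[A] Y) : u = 0 := by
  apply LinearMap.pi_ext
  intro j x
  exact congrArg (fun f : T →ₗ[A] Y => f x) (h (u ∘ₗ LinearMap.single A (fun _ : Fin n => T) j))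


/-- Main lemma: if `T` has pd ≤ 1 and `Ext¹(T,T) = 0`, then `Ext¹(T,N) = 0` for any
quotient `N` of a finite power of `T`. -/
lemma ext1_of_gen {T N : Type} [AddCommGroup T] [Module A T] [AddCommGroup N] [Module A N]
    (hpd : ∃ (m : ℕ) (g : (Fin m → A) →ₗ[A] T),
      Function.Surjective g ∧ Module.Projective A (LinearMap.ker g))
    (hTT : Ext1Vanishes A T T)
    {n : ℕ} (q : (Fin n → T) →ₗ[A] N) (hq : Function.Surjective q) :
    Ext1Vanishes A T N := by
  obtain ⟨m, g, hg, hK⟩ := hpd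
  intro E _ _ i p hi hp hex
  have hpi : ∀ x, p (i x) = 0 := fun x => by
    have : i x ∈ LinearMap.ker p := hex ▸ LinearMap.mem_range_self i x
    simpa using this
  -- lift g through p using freeness of A^m
  obtain ⟨h, hh⟩ := Module.projective_lifting_property p g hp
  have hhap : ∀ a, p (h a) = g a := fun a => congrArg (fun f : (Fin m → A) →ₗ[A] T => f a) hh
  -- restrict to the kernel K, landing in range i
  set K := LinearMap.ker g with hKdef
  have hmem : ∀ x : K, h x ∈ LinearMap.range i := by
    intro x
    rw [hex]
    have hx : g (x : Fin m → A) = 0 := x.2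
    simp [LinearMap.mem_ker, hhap, hx]
  set eI := LinearEquiv.ofInjective i hi with heI
  set ψ : K →ₗ[A] N :=
    ((eI.symm : LinearMap.range i →ₗ[A] N) ∘ₗ
      LinearMap.codRestrict (LinearMap.range i) (h ∘ₗ K.subtype)
        (fun x => hmem x)) with hψ
  have hiψ : ∀ x : K, i (ψ x) = h x := by
    intro x
    have : eI (ψ x) = ⟨h x, hmem x⟩ := by
      simp only [hψ, LinearMap.comp_apply]
      exact eI.apply_symm_apply _
    have := congrArg Subtype.val this
    simpa [heI, LinearEquiv.ofInjective_apply] using this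
  -- lift ψ through q using projectivity of K
  obtain ⟨ψ', hψ'⟩ := Module.projective_lifting_property q ψ hq
  -- extend ψ' over A^m using Ext¹(T, Tⁿ) = 0
  have hexK : LinearMap.range K.subtype = LinearMap.ker g := by
    rw [Submodule.range_subtype]
  obtain ⟨φ', hφ'⟩ := extend_of_ext1 K.subtype g K.injective_subtype hg hexK
    (ext1_pi_right hTT n) ψ'
  set u : (Fin m → A) →ₗ[A] E := h - i ∘ₗ q ∘ₗ φ' with hu
  have hker : LinearMap.ker g ≤ LinearMap.ker u := by
    intro x hx
    have h1 : φ' x = ψ' ⟨x, hx⟩ :=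
      congrArg (fun f : K →ₗ[A] (Fin n → T) => f ⟨x, hx⟩) hφ'
    have h2 : q (ψ' ⟨x, hx⟩) = ψ ⟨x, hx⟩ :=
      congrArg (fun f : K →ₗ[A] N => f ⟨x, hx⟩) hψ'
    have : u x = h x - i (ψ ⟨x, hx⟩) := by simp [hu, h1, h2]
    rw [LinearMap.mem_ker, this, hiψ ⟨x, hx⟩, sub_self]
  obtain ⟨s, hs⟩ := factor_through_surjective g hg u hker
  refine ⟨s, ?_⟩
  ext t
  obtain ⟨a, rfl⟩ := hg t
  have h1 : s (g a) = u a := congrArg (fun f : (Fin m → A) →ₗ[A] E => f a) hs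
  simp [h1, hu, hhap, hpi]


section Trace
variable {T M : Type} [AddCommGroup T] [Module A T] [AddCommGroup M] [Module A M]

lemma range_le_trace {n : ℕ} (q : (Fin n → T) →ₗ[A] M) :
    LinearMap.range q ≤ ⨆ f : T →ₗ[A] M, LinearMap.range f := by
  rintro _ ⟨v, rfl⟩
  rw [← Finset.univ_sum_single v, map_sum]
  apply Submodule.sum_mem
  intro j _
  have : q (Pi.single j (v j)) ∈ LinearMap.range (q ∘ₗ LinearMap.single A (fun _ : Fin n => T) j) :=
    ⟨v j, rfl⟩
  exact le_iSup (fun f : T →ₗ[A] M => LinearMap.range f) _ this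

lemma combine_ranges {n1 n2 : ℕ} (q1 : (Fin n1 → T) →ₗ[A] M) (q2 : (Fin n2 → T) →ₗ[A] M) :
    ∃ q : (Fin (n1 + n2) → T) →ₗ[A] M,
      LinearMap.range q1 ⊔ LinearMap.range q2 ≤ LinearMap.range q := by
  refine ⟨q1 ∘ₗ LinearMap.funLeft A T (Fin.castAdd n2) +
          q2 ∘ₗ LinearMap.funLeft A T (Fin.natAdd n1), sup_le ?_ ?_⟩
  · rintro _ ⟨v, rfl⟩
    refine ⟨Fin.append v (0 : Fin n2 → T), ?_⟩
    have h1 : LinearMap.funLeft A T (Fin.castAdd n2) (Fin.append v (0 : Fin n2 → T)) = v :=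
      funext fun j => Fin.append_left v (0 : Fin n2 → T) j
    have h2 : LinearMap.funLeft A T (Fin.natAdd n1) (Fin.append v (0 : Fin n2 → T)) = 0 :=
      funext fun j => Fin.append_right v (0 : Fin n2 → T) j
    simp [h1, h2]
  · rintro _ ⟨v, rfl⟩
    refine ⟨Fin.append (0 : Fin n1 → T) v, ?_⟩
    have h1 : LinearMap.funLeft A T (Fin.castAdd n2) (Fin.append (0 : Fin n1 → T) v) = 0 :=
      funext fun j => Fin.append_left (0 : Fin n1 → T) v j
    have h2 : LinearMap.funLeft A T (Fin.natAdd n1) (Fin.append (0 : Fin n1 → T) v) = v :=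
      funext fun j => Fin.append_right (0 : Fin n1 → T) v j
    simp [h1, h2]

lemma single_range (f : T →ₗ[A] M) :
    ∃ q : (Fin 1 → T) →ₗ[A] M, LinearMap.range f ≤ LinearMap.range q := by
  refine ⟨f ∘ₗ LinearMap.proj (0 : Fin 1), ?_⟩
  rintro _ ⟨t, rfl⟩
  exact ⟨fun _ => t, rfl⟩

lemma finset_sup_le_range (t : Finset (Submodule A M))
    (ht : ∀ N ∈ t, ∃ f : T →ₗ[A] M, LinearMap.range f = N) :
    ∃ (n : ℕ) (q : (Fin n → T) →ₗ[A] M), t.sup id ≤ LinearMap.range q := by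
  classical
  induction t using Finset.induction with
  | empty => exact ⟨0, 0, by simp⟩
  | @insert N t hN ih =>
    obtain ⟨n', q', hq'⟩ := ih (fun N' hN' => ht N' (Finset.mem_insert_of_mem hN'))
    obtain ⟨f, hf⟩ := ht N (Finset.mem_insert_self N t)
    obtain ⟨q1, hq1⟩ := single_range (A := A) f
    obtain ⟨q, hq⟩ := combine_ranges q1 q'
    refine ⟨1 + n', q, ?_⟩
    rw [Finset.sup_insert]
    apply sup_le
    · exact le_trans (hf ▸ hq1) (le_trans le_sup_left hq)
    · exact le_trans hq' (le_trans le_sup_right hq)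

/-- In a Noetherian module, the trace of `T` is the image of a single map from a
finite power of `T`. -/
lemma trace_eq_range [IsNoetherian A M] :
    ∃ (n : ℕ) (q : (Fin n → T) →ₗ[A] M),
      LinearMap.range q = ⨆ f : T →ₗ[A] M, LinearMap.range f := by
  classical
  set tM := ⨆ f : T →ₗ[A] M, LinearMap.range f with htM
  have hfg : tM.FG := IsNoetherian.noetherian tM
  have hcompact := (Submodule.fg_iff_compact tM).mp hfg
  have hle : tM ≤ sSup (Set.range fun f : T →ₗ[A] M => LinearMap.range f) := by
    rw [sSup_range]
  obtain ⟨t, hts, hsup⟩ := (CompleteLattice.isCompactElement_iff_exists_le_sSup_of_le_sSup (k := tM)).mp hcompact _ hle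
  obtain ⟨n, q, hq⟩ := finset_sup_le_range t (fun N hN => hts hN)
  exact ⟨n, q, le_antisymm (range_le_trace q) (le_trans hsup hq)⟩

end Trace
end Helpers2


/-- Let `T` be a tilting module over the finite-dimensional algebra `A`. Then the pair
`(𝒯, ℱ)` with `𝒯 = {M : Ext¹_A(T,M) = 0}` and `ℱ = {M : Hom_A(T,M) = 0}` is a torsion
pair in `mod A`: `Hom_A(X,Y) = 0` for `X ∈ 𝒯`, `Y ∈ ℱ`, and every finite `A`-module `M`
has a submodule `tM` with `tM ∈ 𝒯` and `M/tM ∈ ℱ` (giving the short exact sequence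
`0 → tM → M → M/tM → 0`). -/
theorem tilting_module_torsion_pair
    (k A : Type) [Field k] [Ring A] [Algebra k A] [FiniteDimensional k A]
    (T : Type) [AddCommGroup T] [Module A T] [Module.Finite A T]
    (hT : IsTiltingModule A T) :
    (∀ (X Y : Type) [AddCommGroup X] [Module A X] [AddCommGroup Y] [Module A Y],
      Module.Finite A X → Module.Finite A Y →
      Ext1Vanishes A T X → (∀ g : T →ₗ[A] Y, g = 0) →
      ∀ f : X →ₗ[A] Y, f = 0) ∧
    (∀ (M : Type) [AddCommGroup M] [Module A M], Module.Finite A M →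
      ∃ tM : Submodule A M, Ext1Vanishes A T ↥tM ∧ ∀ f : T →ₗ[A] (M ⧸ tM), f = 0) := by
  obtain ⟨hpd, hTT, T', T'', ⟨n', f', g', hfg'⟩, ⟨n'', f'', g'', hfg''⟩,
    i, p, hi, hp, hex⟩ := hT
  constructor
  · -- no maps from torsion to torsion-free
    intro X Y _ _ _ _ _ _ hX hY f
    have hX'' : Ext1Vanishes A T X → Ext1Vanishes A (T'' : Type) X := fun h =>
      ext1_retract f'' g'' hfg'' (ext1_pi_left h n'')
    apply LinearMap.ext
    intro x
    obtain ⟨φ, hφ⟩ := extend_of_ext1 i p hi hp hex (hX'' hX)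
      (LinearMap.toSpanSingleton A X x)
    have hφx : φ (i 1) = x := by
      have := congrArg (fun u : A →ₗ[A] X => u 1) hφ
      simpa [LinearMap.toSpanSingleton_apply] using this
    have hzero : f ∘ₗ φ ∘ₗ g' = 0 := hom_pi_zero hY n' _
    have hgf : g' (f' (i 1)) = i 1 :=
      congrArg (fun u : (T' : Type) →ₗ[A] (T' : Type) => u (i 1)) hfg'
    calc f x = f (φ (g' (f' (i 1)))) := by rw [hgf, hφx]
    _ = (f ∘ₗ φ ∘ₗ g') (f' (i 1)) := rfl
    _ = 0 := by rw [hzero]; rfl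
  · -- torsion submodule via the trace of T
    intro M _ _ hM
    haveI h1 : IsNoetherian A A := isNoetherian_of_tower k inferInstance
    haveI : IsNoetherianRing A := isNoetherianRing_iff.mpr h1
    haveI : IsNoetherian A M := isNoetherian_of_isNoetherianRing_of_finite A M
    set tM : Submodule A M := ⨆ f : T →ₗ[A] M, LinearMap.range f with htM
    obtain ⟨n, q, hq⟩ := trace_eq_range (A := A) (T := T) (M := M)
    rw [← htM] at hq
    set q' : (Fin n → T) →ₗ[A] tM :=
      LinearMap.codRestrict tM q (fun v => hq ▸ LinearMap.mem_range_self q v) with hq'def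
    have hq' : Function.Surjective q' := by
      rintro ⟨x, hx⟩
      rw [← hq] at hx
      obtain ⟨v, hv⟩ := hx
      exact ⟨v, Subtype.ext hv⟩
    have hExt : Ext1Vanishes A T ↥tM := ext1_of_gen hpd hTT q' hq'
    refine ⟨tM, hExt, ?_⟩
    intro f
    obtain ⟨l, hl⟩ := lift_of_ext1 hExt tM.subtype tM.mkQ tM.injective_subtype
      (Submodule.mkQ_surjective tM)
      (by rw [Submodule.range_subtype, Submodule.ker_mkQ]) f
    apply LinearMap.ext
    intro t
    have hmem : l t ∈ tM := by
      rw [htM]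
      exact le_iSup (fun f : T →ₗ[A] M => LinearMap.range f) l ⟨t, rfl⟩
    have h2 : tM.mkQ (l t) = f t := congrArg (fun u : T →ₗ[A] M ⧸ tM => u t) hl
    rw [← h2]
    simpa [Submodule.mkQ_apply, Submodule.Quotient.mk_eq_zero] using hmem
end

section
/- Let (V; U_i)_{i∈I} be an S-space where dim_k V = 2. Then (V; U_i) is indecomposable if and only if at least three of the subspaces U_i are one-dimensional and pairwise distinct. -/
/-- An S-space `(V; U_i)` is decomposable if there is a direct sum decomposition
`V = V' ⊕ V''` with both summands nonzero such that every `U_i` is the direct sum of its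
intersections with `V'` and `V''`. -/
def SSpaceDecomposable (k V : Type*) [Field k] [AddCommGroup V] [Module k V]
    {I : Type*} (U : I → Submodule k V) : Prop :=
  ∃ V' V'' : Submodule k V, V' ≠ ⊥ ∧ V'' ≠ ⊥ ∧ IsCompl V' V'' ∧
    ∀ i, U i = (U i ⊓ V') ⊔ (U i ⊓ V'')

section Aux

variable {k V : Type} [Field k] [AddCommGroup V] [Module k V]

/-- A line which splits along two lines equals one of them. -/
lemma line_eq_of_split [FiniteDimensional k V]
    {L V' V'' : Submodule k V} (hL : Module.finrank k L = 1)
    (h1 : Module.finrank k V' = 1) (h2 : Module.finrank k V'' = 1)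
    (hsplit : L = (L ⊓ V') ⊔ (L ⊓ V'')) : L = V' ∨ L = V'' := by
  have key : ∀ W : Submodule k V, Module.finrank k W = 1 →
      Module.finrank k (L ⊓ W : Submodule k V) = 1 → L = W := by
    intro W hW hd
    have e1 : L ⊓ W = W := Submodule.eq_of_le_of_finrank_le inf_le_right (by omega)
    have e2 : L ⊓ W = L := Submodule.eq_of_le_of_finrank_le inf_le_left (by omega)
    rw [← e1, e2]
  have hd1 : Module.finrank k (L ⊓ V' : Submodule k V) ≤ 1 := by
    rw [← hL]; exact Submodule.finrank_mono inf_le_left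
  have hd2 : Module.finrank k (L ⊓ V'' : Submodule k V) ≤ 1 := by
    rw [← hL]; exact Submodule.finrank_mono inf_le_left
  rcases Nat.lt_or_ge (Module.finrank k (L ⊓ V' : Submodule k V)) 1 with h | h
  · rcases Nat.lt_or_ge (Module.finrank k (L ⊓ V'' : Submodule k V)) 1 with h' | h'
    · exfalso
      have b1 : L ⊓ V' = ⊥ := Submodule.finrank_eq_zero.mp (by omega)
      have b2 : L ⊓ V'' = ⊥ := Submodule.finrank_eq_zero.mp (by omega)
      rw [b1, b2, sup_idem] at hsplit
      rw [hsplit] at hL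
      simp at hL
    · exact Or.inr (key V'' h2 (by omega))
  · exact Or.inl (key V' h1 (by omega))

/-- If two distinct lines cover all the 1-dimensional `U i`, the S-space is decomposable. -/
lemma decomposable_of_two_lines [FiniteDimensional k V]
    (hdim : Module.finrank k V = 2) {I : Type} (U : I → Submodule k V)
    {L₁ L₂ : Submodule k V} (h1 : Module.finrank k L₁ = 1)
    (h2 : Module.finrank k L₂ = 1) (hne : L₁ ≠ L₂)
    (hcov : ∀ i, Module.finrank k (U i) = 1 → U i = L₁ ∨ U i = L₂) :
    SSpaceDecomposable k V U := by
  have hinf : L₁ ⊓ L₂ = ⊥ := by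
    by_contra hb
    have hpos : 0 < Module.finrank k (L₁ ⊓ L₂ : Submodule k V) := by
      rcases Nat.eq_zero_or_pos (Module.finrank k (L₁ ⊓ L₂ : Submodule k V)) with h | h
      · exact absurd (Submodule.finrank_eq_zero.mp h) hb
      · exact h
    have le1 : Module.finrank k (L₁ ⊓ L₂ : Submodule k V) ≤ 1 := by
      rw [← h1]; exact Submodule.finrank_mono inf_le_left
    have e1 : L₁ ⊓ L₂ = L₁ := Submodule.eq_of_le_of_finrank_le inf_le_left (by omega)
    have e2 : L₁ ⊓ L₂ = L₂ := Submodule.eq_of_le_of_finrank_le inf_le_right (by omega)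
    exact hne (e1 ▸ e2)
  have hsup : L₁ ⊔ L₂ = ⊤ := by
    apply Submodule.eq_top_of_finrank_eq
    have := Submodule.finrank_sup_add_finrank_inf_eq L₁ L₂
    rw [hinf] at this
    simp only [finrank_bot] at this
    omega
  have hcompl : IsCompl L₁ L₂ := ⟨disjoint_iff.mpr hinf, codisjoint_iff.mpr hsup⟩
  refine ⟨L₁, L₂, ?_, ?_, hcompl, ?_⟩
  · intro h; rw [h] at h1; simp at h1
  · intro h; rw [h] at h2; simp at h2
  · intro i
    have hle : Module.finrank k (U i) ≤ 2 := hdim ▸ Submodule.finrank_le (U i)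
    interval_cases h : Module.finrank k (U i)
    · rw [Submodule.finrank_eq_zero.mp h]; simp
    · rcases hcov i h with rfl | rfl
      · rw [inf_idem]
        exact (sup_eq_left.mpr inf_le_left).symm
      · rw [inf_idem]
        exact (sup_eq_right.mpr inf_le_left).symm
    · have : U i = ⊤ := Submodule.eq_top_of_finrank_eq (by rw [h, hdim])
      rw [this]
      simp [hsup]

end Aux

/-- Let `(V; U_i)` be an S-space with `dim V = 2`. Then `(V; U_i)` is indecomposable if
and only if at least three of the subspaces `U_i` are one-dimensional and pairwise
distinct. -/
theorem sspace_dim_two_indecomposable_iff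
    (k V : Type) [Field k] [AddCommGroup V] [Module k V]
    (hdim : Module.finrank k V = 2)
    (I : Type) (U : I → Submodule k V) :
    ¬ SSpaceDecomposable k V U ↔
      ∃ i j l : I,
        Module.finrank k (U i) = 1 ∧ Module.finrank k (U j) = 1 ∧
        Module.finrank k (U l) = 1 ∧
        U i ≠ U j ∧ U i ≠ U l ∧ U j ≠ U l := by
  have : FiniteDimensional k V := FiniteDimensional.of_finrank_pos (by omega)
  constructor
  · intro hnd
    by_contra hne
    push_neg at hne
    apply hnd
    by_cases h2 : ∃ i j : I, Module.finrank k (U i) = 1 ∧ Module.finrank k (U j) = 1 ∧ U i ≠ U j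
    · obtain ⟨i, j, hi, hj, hij⟩ := h2
      refine decomposable_of_two_lines hdim U hi hj hij ?_
      intro l hl
      by_contra hc
      push_neg at hc
      exact hc.2 (hne i j l hi hj hl hij (Ne.symm hc.1)).symm
    · push_neg at h2
      by_cases h1 : ∃ i : I, Module.finrank k (U i) = 1
      · obtain ⟨i, hi⟩ := h1
        obtain ⟨W, hW⟩ := Submodule.exists_isCompl (U i)
        have hrk : Module.finrank k W = 1 := by
          have := Submodule.finrank_add_eq_of_isCompl hW
          rw [hi, hdim] at this; omega
        have hne' : U i ≠ W := by
          intro h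
          have hd := disjoint_iff.mp hW.disjoint
          rw [← h, inf_idem] at hd
          rw [hd] at hi; simp at hi
        refine decomposable_of_two_lines hdim U hi hrk hne' ?_
        intro l hl
        exact Or.inl ((h2 l i hl hi).symm ▸ rfl)
      · push_neg at h1
        have : Nontrivial V := Module.nontrivial_of_finrank_pos
          (R := k) (by omega)
        obtain ⟨v, hv⟩ := exists_ne (0 : V)
        have hL : Module.finrank k (Submodule.span k {v}) = 1 :=
          finrank_span_singleton hv
        obtain ⟨W, hW⟩ := Submodule.exists_isCompl (Submodule.span k {v})
        have hrk : Module.finrank k W = 1 := by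
          have := Submodule.finrank_add_eq_of_isCompl hW
          rw [hL, hdim] at this; omega
        have hne' : Submodule.span k {v} ≠ W := by
          intro h
          have hd := disjoint_iff.mp hW.disjoint
          rw [← h, inf_idem] at hd
          rw [hd] at hL; simp at hL
        refine decomposable_of_two_lines hdim U hL hrk hne' ?_
        intro l hl
        exact absurd hl (h1 l)
  · rintro ⟨i, j, l, hi, hj, hl, hij, hil, hjl⟩ ⟨V', V'', hb1, hb2, hc, hsplit⟩
    have hsum := Submodule.finrank_add_eq_of_isCompl hc
    rw [hdim] at hsum
    have hp1 : 0 < Module.finrank k V' := by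
      rcases Nat.eq_zero_or_pos (Module.finrank k V') with h | h
      · exact absurd (Submodule.finrank_eq_zero.mp h) hb1
      · exact h
    have hp2 : 0 < Module.finrank k V'' := by
      rcases Nat.eq_zero_or_pos (Module.finrank k V'') with h | h
      · exact absurd (Submodule.finrank_eq_zero.mp h) hb2
      · exact h
    have hr1 : Module.finrank k V' = 1 := by omega
    have hr2 : Module.finrank k V'' = 1 := by omega
    have key : ∀ m : I, Module.finrank k (U m) = 1 → U m = V' ∨ U m = V'' :=
      fun m hm => line_eq_of_split hm hr1 hr2 (hsplit m)
    rcases key i hi with h | h <;> rcases key j hj with h' | h' <;>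
      rcases key l hl with h'' | h'' <;>
      first
        | exact hij (h.trans h'.symm)
        | exact hil (h.trans h''.symm)
        | exact hjl (h'.trans h''.symm)
end

section
/- Let q be a positive semidefinite integral quadratic unit form on Z^n of extended Dynkin type with radical Z·h where h has all coordinates positive. Then for every root x (q(x) = 1) and every integer t, x + t·h is again a root, and the set of roots modulo the radical is finite. -/
open Finset

/-- The radical of an integral quadratic form `q` on `ℤ^n`:
vectors `v` with `q (v + w) = q w` for all `w`. -/
def quadRadical {n : ℕ} (q : (Fin n → ℤ) → ℤ) : Set (Fin n → ℤ) :=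
  {v | ∀ w, q (v + w) = q w}

namespace RootsShiftAux

variable {n : ℕ} {q : (Fin n → ℤ) → ℤ}

/-- Polarization of `q`. -/
def pol (q : (Fin n → ℤ) → ℤ) (x y : Fin n → ℤ) : ℤ := q (x + y) - q x - q y

lemma pol_comm (x y : Fin n → ℤ) : pol q x y = pol q y x := by
  simp [pol, add_comm]
  ring

lemma pol_add_left
    (hpolar : ∀ x y z, q (x + y + z) - q (x + y) - q (x + z) + q x
      = q (y + z) - q y - q z) (x y z : Fin n → ℤ) :
    pol q (x + y) z = pol q x z + pol q y z := by
  have h := hpolar x y z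
  simp only [pol]
  linarith

/-- `pol q · y` as an additive homomorphism. -/
def polHom
    (hpolar : ∀ x y z, q (x + y + z) - q (x + y) - q (x + z) + q x
      = q (y + z) - q y - q z) (y : Fin n → ℤ) : (Fin n → ℤ) →+ ℤ :=
  AddMonoidHom.mk' (fun x => pol q x y) (fun a b => pol_add_left hpolar a b y)

lemma pol_zsmul_left
    (hpolar : ∀ x y z, q (x + y + z) - q (x + y) - q (x + z) + q x
      = q (y + z) - q y - q z) (t : ℤ) (x y : Fin n → ℤ) :
    pol q (t • x) y = t * pol q x y := by
  have := (polHom hpolar y).map_zsmul t x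
  simpa [polHom, smul_eq_mul] using this

lemma q_add (u v : Fin n → ℤ) : q (u + v) = q u + q v + pol q u v := by
  simp [pol]

lemma pol_self (hquad : ∀ (t : ℤ) (x), q (t • x) = t ^ 2 * q x) (x : Fin n → ℤ) :
    pol q x x = 2 * q x := by
  have h2 : x + x = (2 : ℤ) • x := (two_smul ℤ x).symm
  rw [pol, h2, hquad]
  ring

end RootsShiftAux

open RootsShiftAux in
/-- Let `q` be a positive semidefinite integral quadratic unit form on `ℤ^n` of extended
Dynkin type, i.e. with radical `ℤ·h` where all coordinates of `h` are positive. Then for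
every root `x` (`q x = 1`) and every `t : ℤ`, `x + t • h` is again a root, and the set of
roots modulo the radical is finite. -/
theorem roots_shift_by_radical_and_finiteness
    (n : ℕ) (q : (Fin n → ℤ) → ℤ)
    -- q is a quadratic form: q(t • x) = t² q(x) and polarization is bilinear
    (hquad : ∀ (t : ℤ) (x), q (t • x) = t ^ 2 * q x)
    (hpolar : ∀ x y z, q (x + y + z) - q (x + y) - q (x + z) + q x
      = q (y + z) - q y - q z)
    -- unit form: value 1 on the standard basis vectors
    (hunit : ∀ i : Fin n, q (Pi.single i 1) = 1)
    -- positive semidefinite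
    (hpsd : ∀ x, 0 ≤ q x)
    -- the radical is ℤ·h, with h having all coordinates positive
    (h : Fin n → ℤ) (hpos : ∀ i, 0 < h i)
    (hrad : quadRadical q = {v | ∃ t : ℤ, v = t • h}) :
    (∀ (x : Fin n → ℤ), q x = 1 → ∀ t : ℤ, q (x + t • h) = 1) ∧
    Set.Finite ((fun x : Fin n → ℤ => Submodule.Quotient.mk
        (p := Submodule.span ℤ {h}) x) '' {x | q x = 1}) := by
  have q0 : q 0 = 0 := by
    have := hquad 0 0
    simpa using this
  have hrad_mem : ∀ t : ℤ, (t • h) ∈ quadRadical q := by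
    intro t; rw [hrad]; exact ⟨t, rfl⟩
  have hshift : ∀ (x : Fin n → ℤ), q x = 1 → ∀ t : ℤ, q (x + t • h) = 1 := by
    intro x hx t
    rw [add_comm, hrad_mem t x, hx]
  have hqh : q h = 0 := by
    have := (hrad_mem 1) 0
    simpa [q0] using this
  have polh : ∀ y, pol q h y = 0 := by
    intro y
    have h1 : q (h + y) = q y := by
      have := (hrad_mem 1) y; simpa using this
    simp [pol, h1, hqh]
  -- Cauchy-Schwarz style bound
  have hbound : ∀ x, q x = 1 → ∀ i, pol q x (Pi.single i 1) ∈ Set.Icc (-2 : ℤ) 2 := by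
    intro x hx i
    set y : Fin n → ℤ := Pi.single i 1 with hy
    set B : ℤ := pol q x y with hB
    have hexp : ∀ a c : ℤ, 0 ≤ a ^ 2 + a * c * B + c ^ 2 := by
      intro a c
      have h0 := hpsd (a • x + c • y)
      have hq1 : q (a • x + c • y) = a ^ 2 * q x + c ^ 2 * q y + a * c * B := by
        rw [q_add (q := q), hquad, hquad]
        have hpp : pol q (a • x) (c • y) = a * c * B := by
          rw [pol_zsmul_left hpolar, pol_comm, pol_zsmul_left hpolar, pol_comm]
          ring
        rw [hpp]
      rw [hq1, hx, hunit i] at h0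
      linarith
    have key := hexp (-B) 2
    constructor
    · nlinarith [sq_nonneg (B + 2)]
    · nlinarith [sq_nonneg (B - 2)]
  -- radical criterion
  have hcrit : ∀ v : Fin n → ℤ, (∀ i, pol q v (Pi.single i 1) = 0) →
      v ∈ quadRadical q := by
    intro v hv
    have hpolw : ∀ w, pol q v w = 0 := by
      intro w
      have hw : w = ∑ i, (w i) • (Pi.single i 1 : Fin n → ℤ) := by
        have := Finset.univ_sum_single w
        rw [← this]
        refine Finset.sum_congr rfl fun i _ => ?_
        rw [← Pi.single_smul]
        simp
      rw [pol_comm, hw]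
      rw [show pol q (∑ i, (w i) • (Pi.single i 1 : Fin n → ℤ)) v
          = (polHom hpolar v) (∑ i, (w i) • (Pi.single i 1 : Fin n → ℤ)) from rfl]
      rw [map_sum]
      refine Finset.sum_eq_zero fun i _ => ?_
      show pol q ((w i) • (Pi.single i 1 : Fin n → ℤ)) v = 0
      rw [pol_zsmul_left hpolar, pol_comm, hv i, mul_zero]
    have hqv : q v = 0 := by
      have h1 := pol_self hquad v
      have h2 := hpolw v
      linarith
    intro w
    have h3 := hpolw w
    have h4 := q_add (q := q) v w
    rw [h3, hqv] at h4
    linarith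
  refine ⟨hshift, ?_⟩
  -- the linear map collecting polarizations with the basis vectors
  set L : (Fin n → ℤ) →ₗ[ℤ] (Fin n → ℤ) :=
    LinearMap.pi (fun i => (polHom hpolar (Pi.single i 1)).toIntLinearMap) with hL
  have hLapply : ∀ x i, L x i = pol q x (Pi.single i 1) := by
    intro x i; rfl
  have hker : Submodule.span ℤ {h} ≤ LinearMap.ker L := by
    rw [Submodule.span_singleton_le_iff_mem, LinearMap.mem_ker]
    funext i
    rw [hLapply, polh]
    rfl
  set G := (Submodule.span ℤ {h}).liftQ L hker with hG
  apply Set.Finite.of_finite_image (f := G)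
  · apply Set.Finite.subset (Set.Finite.pi (fun _ : Fin n => Set.finite_Icc (-2 : ℤ) 2))
    rintro g ⟨c, ⟨x, hx, rfl⟩, rfl⟩
    rw [Set.mem_univ_pi]
    intro i
    rw [hG, Submodule.liftQ_apply, hLapply]
    exact hbound x hx i
  · rintro c₁ ⟨x, hx, rfl⟩ c₂ ⟨y, hy, rfl⟩ hGeq
    rw [hG, Submodule.liftQ_apply, Submodule.liftQ_apply] at hGeq
    have hpol0 : ∀ i, pol q (x - y) (Pi.single i 1) = 0 := by
      intro i
      have hxy : (polHom hpolar (Pi.single i 1)) (x - y) = 0 := by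
        rw [map_sub]
        have := congrFun hGeq i
        rw [hLapply, hLapply] at this
        show pol q x (Pi.single i 1) - pol q y (Pi.single i 1) = 0
        omega
      exact hxy
    have hmem := hcrit (x - y) hpol0
    rw [hrad] at hmem
    obtain ⟨t, ht⟩ := hmem
    exact (Submodule.Quotient.eq _).mpr (Submodule.mem_span_singleton.mpr ⟨t, ht.symm⟩)
end
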